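/- arXiv:hep-th/0301100 — 6 statements merged into one kernel-verified Lean document; each statement's English description precedes it below -/
import Mathlib

section
/- Let σ₀ be the real antisymmetric 4×4 matrix with entries σ₀^{02} = −1, σ₀^{13} = −1, σ₀^{20} = 1, σ₀^{31} = 1 and all other entries zero (the standard symplectic matrix (0 −𝟙; 𝟙 0) in 2×2 block form). Then the set of real antisymmetric 4×4 matrices σ satisfying |e(σ)| = |m(σ)| and (e(σ)·m(σ))² = 1 coincides with the orbit { Λ σ₀ Λᵗ : Λ ∈ O(1,3) } of σ₀ under the full Lorentz group. -/
open Matrix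

/-- The standard symplectic matrix `(0 -1; 1 0)` in 2×2 block form. -/
noncomputable def sigma0 : Matrix (Fin 4) (Fin 4) ℝ :=
  !![0, 0, -1, 0; 0, 0, 0, -1; 1, 0, 0, 0; 0, 1, 0, 0]

/-- The Minkowski metric `η = diag(1, -1, -1, -1)`. -/
noncomputable def minkEta : Matrix (Fin 4) (Fin 4) ℝ :=
  Matrix.diagonal ![1, -1, -1, -1]

/-- The electric part of an antisymmetric matrix. -/
noncomputable def elecPart (σ : Matrix (Fin 4) (Fin 4) ℝ) : EuclideanSpace ℝ (Fin 3) :=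
  (WithLp.equiv 2 (Fin 3 → ℝ)).symm ![σ 0 1, σ 0 2, σ 0 3]

/-- The magnetic part of an antisymmetric matrix. -/
noncomputable def magPart (σ : Matrix (Fin 4) (Fin 4) ℝ) : EuclideanSpace ℝ (Fin 3) :=
  (WithLp.equiv 2 (Fin 3 → ℝ)).symm ![σ 2 3, σ 3 1, σ 1 2]

noncomputable def asm (a b c d f g : ℝ) : Matrix (Fin 4) (Fin 4) ℝ :=
  !![0,a,b,c; -a,0,g,-f; -b,-g,0,d; -c,f,-d,0]

set_option linter.unusedTactic false
set_option linter.unusedVariables false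

lemma minkEta_eq : minkEta = !![1,0,0,0; 0,-1,0,0; 0,0,-1,0; 0,0,0,-1] := by
  ext i j
  fin_cases i <;> fin_cases j <;> simp [minkEta, Matrix.diagonal, Matrix.vecHead, Matrix.vecTail]
theorem mul_fin_four {α} [AddCommMonoid α] [Mul α]
    (a₁₁ a₁₂ a₁₃ a₁₄ a₂₁ a₂₂ a₂₃ a₂₄ a₃₁ a₃₂ a₃₃ a₃₄ a₄₁ a₄₂ a₄₃ a₄₄
     b₁₁ b₁₂ b₁₃ b₁₄ b₂₁ b₂₂ b₂₃ b₂₄ b₃₁ b₃₂ b₃₃ b₃₄ b₄₁ b₄₂ b₄₃ b₄₄ : α) :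
    !![a₁₁, a₁₂, a₁₃, a₁₄; a₂₁, a₂₂, a₂₃, a₂₄; a₃₁, a₃₂, a₃₃, a₃₄; a₄₁, a₄₂, a₄₃, a₄₄] *
    !![b₁₁, b₁₂, b₁₃, b₁₄; b₂₁, b₂₂, b₂₃, b₂₄; b₃₁, b₃₂, b₃₃, b₃₄; b₄₁, b₄₂, b₄₃, b₄₄] =
    !![a₁₁*b₁₁ + a₁₂*b₂₁ + a₁₃*b₃₁ + a₁₄*b₄₁, a₁₁*b₁₂ + a₁₂*b₂₂ + a₁₃*b₃₂ + a₁₄*b₄₂,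
       a₁₁*b₁₃ + a₁₂*b₂₃ + a₁₃*b₃₃ + a₁₄*b₄₃, a₁₁*b₁₄ + a₁₂*b₂₄ + a₁₃*b₃₄ + a₁₄*b₄₄;
       a₂₁*b₁₁ + a₂₂*b₂₁ + a₂₃*b₃₁ + a₂₄*b₄₁, a₂₁*b₁₂ + a₂₂*b₂₂ + a₂₃*b₃₂ + a₂₄*b₄₂,
       a₂₁*b₁₃ + a₂₂*b₂₃ + a₂₃*b₃₃ + a₂₄*b₄₃, a₂₁*b₁₄ + a₂₂*b₂₄ + a₂₃*b₃₄ + a₂₄*b₄₄;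
       a₃₁*b₁₁ + a₃₂*b₂₁ + a₃₃*b₃₁ + a₃₄*b₄₁, a₃₁*b₁₂ + a₃₂*b₂₂ + a₃₃*b₃₂ + a₃₄*b₄₂,
       a₃₁*b₁₃ + a₃₂*b₂₃ + a₃₃*b₃₃ + a₃₄*b₄₃, a₃₁*b₁₄ + a₃₂*b₂₄ + a₃₃*b₃₄ + a₃₄*b₄₄;
       a₄₁*b₁₁ + a₄₂*b₂₁ + a₄₃*b₃₁ + a₄₄*b₄₁, a₄₁*b₁₂ + a₄₂*b₂₂ + a₄₃*b₃₂ + a₄₄*b₄₂,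
       a₄₁*b₁₃ + a₄₂*b₂₃ + a₄₃*b₃₃ + a₄₄*b₄₃, a₄₁*b₁₄ + a₄₂*b₂₄ + a₄₃*b₃₄ + a₄₄*b₄₄] := by
  ext i j
  fin_cases i <;> fin_cases j <;> simp [Matrix.mul_apply, Fin.sum_univ_four]
theorem transpose_fin_four {α} (a₁₁ a₁₂ a₁₃ a₁₄ a₂₁ a₂₂ a₂₃ a₂₄ a₃₁ a₃₂ a₃₃ a₃₄ a₄₁ a₄₂ a₄₃ a₄₄ : α) :
    (!![a₁₁, a₁₂, a₁₃, a₁₄; a₂₁, a₂₂, a₂₃, a₂₄; a₃₁, a₃₂, a₃₃, a₃₄; a₄₁, a₄₂, a₄₃, a₄₄])ᵀ =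
    !![a₁₁, a₂₁, a₃₁, a₄₁; a₁₂, a₂₂, a₃₂, a₄₂; a₁₃, a₂₃, a₃₃, a₄₃; a₁₄, a₂₄, a₃₄, a₄₄] := by
  ext i j
  fin_cases i <;> fin_cases j <;> simp

noncomputable def rotM (x1 y1 z1 x2 y2 z2 : ℝ) : Matrix (Fin 4) (Fin 4) ℝ :=
  !![1,0,0,0; 0,x1,y1,z1; 0,x2,y2,z2;
     0, y1*z2-z1*y2, z1*x2-x1*z2, x1*y2-y1*x2]

section rot
variable {x1 y1 z1 x2 y2 z2 : ℝ}

lemma colrel (h1 : x1*x1+y1*y1+z1*z1 = 1) (h2 : x2*x2+y2*y2+z2*z2 = 1)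
    (h12 : x1*x2+y1*y2+z1*z2 = 0) :
    (!![x1,x2,y1*z2-z1*y2; y1,y2,z1*x2-x1*z2; z1,z2,x1*y2-y1*x2] : Matrix (Fin 3) (Fin 3) ℝ) *
    !![x1,y1,z1; x2,y2,z2; y1*z2-z1*y2, z1*x2-x1*z2, x1*y2-y1*x2] = 1 := by
  apply mul_eq_one_comm.mp
  rw [Matrix.mul_fin_three, Matrix.one_fin_three]
  ext i j
  fin_cases i <;> fin_cases j <;> simp [Matrix.vecHead, Matrix.vecTail] <;>
    first
      | linear_combination h1
      | linear_combination h2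
      | linear_combination h12
      | linear_combination (x2*x2+y2*y2+z2*z2)*h1 + h2 - (x1*x2+y1*y2+z1*z2)*h12
      | ring1

set_option maxHeartbeats 2000000 in
lemma rot_lor (h1 : x1*x1+y1*y1+z1*z1 = 1) (h2 : x2*x2+y2*y2+z2*z2 = 1)
    (h12 : x1*x2+y1*y2+z1*z2 = 0) :
    (rotM x1 y1 z1 x2 y2 z2)ᵀ * minkEta * rotM x1 y1 z1 x2 y2 z2 = minkEta := by
  have hC := colrel h1 h2 h12
  rw [Matrix.mul_fin_three, Matrix.one_fin_three] at hC
  have key : ∀ i j : Fin 3,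
      (!![x1*x1+x2*x2+(y1*z2-z1*y2)*(y1*z2-z1*y2),
          x1*y1+x2*y2+(y1*z2-z1*y2)*(z1*x2-x1*z2),
          x1*z1+x2*z2+(y1*z2-z1*y2)*(x1*y2-y1*x2);
          y1*x1+y2*x2+(z1*x2-x1*z2)*(y1*z2-z1*y2),
          y1*y1+y2*y2+(z1*x2-x1*z2)*(z1*x2-x1*z2),
          y1*z1+y2*z2+(z1*x2-x1*z2)*(x1*y2-y1*x2);
          z1*x1+z2*x2+(x1*y2-y1*x2)*(y1*z2-z1*y2),
          z1*y1+z2*y2+(x1*y2-y1*x2)*(z1*x2-x1*z2),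
          z1*z1+z2*z2+(x1*y2-y1*x2)*(x1*y2-y1*x2)] : Matrix (Fin 3) (Fin 3) ℝ) i j
        = !![(1:ℝ),0,0;0,1,0;0,0,1] i j := fun i j => by rw [hC]
  have c11 := key 0 0; have c22 := key 1 1; have c33 := key 2 2
  have c12 := key 0 1; have c13 := key 0 2; have c23 := key 1 2
  simp at c11 c22 c33 c12 c13 c23
  rw [rotM, minkEta_eq, transpose_fin_four, mul_fin_four, mul_fin_four]
  ext i j
  fin_cases i <;> fin_cases j <;> simp [Matrix.vecHead, Matrix.vecTail] <;>
    first
      | ring1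
      | linear_combination c11
      | linear_combination c22
      | linear_combination c33
      | linear_combination c12
      | linear_combination c13
      | linear_combination c23
      | linear_combination -c11
      | linear_combination -c22
      | linear_combination -c33
      | linear_combination -c12
      | linear_combination -c13
      | linear_combination -c23
end rot

set_option maxHeartbeats 2000000 in
lemma rot_conj {x1 y1 z1 x2 y2 z2 : ℝ} (a b c d f g : ℝ)
    (h1 : x1*x1+y1*y1+z1*z1 = 1) (h2 : x2*x2+y2*y2+z2*z2 = 1)
    (h12 : x1*x2+y1*y2+z1*z2 = 0) :
    rotM x1 y1 z1 x2 y2 z2 * asm a b c d f g * (rotM x1 y1 z1 x2 y2 z2)ᵀ =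
      asm (x1*a+y1*b+z1*c) (x2*a+y2*b+z2*c)
        ((y1*z2-z1*y2)*a+(z1*x2-x1*z2)*b+(x1*y2-y1*x2)*c)
        (x1*d+y1*f+z1*g) (x2*d+y2*f+z2*g)
        ((y1*z2-z1*y2)*d+(z1*x2-x1*z2)*f+(x1*y2-y1*x2)*g) := by
  rw [rotM, asm, asm, transpose_fin_four, mul_fin_four, mul_fin_four]
  ext i j
  fin_cases i <;> fin_cases j <;> simp [Matrix.vecHead, Matrix.vecTail] <;>
    first
      | ring1
      | linear_combination (d*x1+f*y1+g*z1)*h2 - (d*x2+f*y2+g*z2)*h12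
      | linear_combination (d*x2+f*y2+g*z2)*h1 - (d*x1+f*y1+g*z1)*h12
      | linear_combination (-(d*x1+f*y1+g*z1))*h2 + (d*x2+f*y2+g*z2)*h12
      | linear_combination (-(d*x2+f*y2+g*z2))*h1 + (d*x1+f*y1+g*z1)*h12

lemma boost_lor {C S : ℝ} (h : C*C - S*S = 1) :
    (!![C,0,0,S; 0,1,0,0; 0,0,1,0; S,0,0,C] : Matrix (Fin 4) (Fin 4) ℝ)ᵀ * minkEta *
      !![C,0,0,S; 0,1,0,0; 0,0,1,0; S,0,0,C] = minkEta := by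
  rw [minkEta_eq, transpose_fin_four, mul_fin_four, mul_fin_four]
  ext i j
  fin_cases i <;> fin_cases j <;> simp [Matrix.vecHead, Matrix.vecTail] <;>
    first
      | ring1
      | linear_combination h
      | linear_combination -h

lemma boost_conj {C S : ℝ} (a b c d f g : ℝ) (h : C*C - S*S = 1) :
    !![C,0,0,S; 0,1,0,0; 0,0,1,0; S,0,0,C] * asm a b c d f g *
      (!![C,0,0,S; 0,1,0,0; 0,0,1,0; S,0,0,C] : Matrix (Fin 4) (Fin 4) ℝ)ᵀ =
      asm (C*a+S*f) (C*b-S*d) c (C*d-S*b) (S*a+C*f) g := by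
  rw [asm, asm, transpose_fin_four, mul_fin_four, mul_fin_four]
  ext i j
  fin_cases i <;> fin_cases j <;> simp [Matrix.vecHead, Matrix.vecTail] <;>
    first
      | ring1
      | linear_combination a*h
      | linear_combination -a*h
      | linear_combination c*h
      | linear_combination -c*h
      | linear_combination d*h
      | linear_combination -d*h
      | linear_combination f*h
      | linear_combination -f*h
      | linear_combination b*h
      | linear_combination -b*h
      | linear_combination g*h
      | linear_combination -g*h

lemma eta_lor : minkEtaᵀ * minkEta * minkEta = minkEta := by
  rw [minkEta_eq, transpose_fin_four, mul_fin_four, mul_fin_four]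
  norm_num

lemma eta_conj (a b c d f g : ℝ) :
    minkEta * asm a b c d f g * minkEtaᵀ = asm (-a) (-b) (-c) d f g := by
  rw [minkEta_eq, asm, asm, transpose_fin_four, mul_fin_four, mul_fin_four]
  norm_num
lemma det_minkEta : minkEta.det = -1 := by
  simp [minkEta, Matrix.det_diagonal, Fin.prod_univ_four]
lemma eta_sq : minkEta * minkEta = 1 := by
  rw [minkEta]
  ext i j
  fin_cases i <;> fin_cases j <;>
    simp [Matrix.mul_apply, Fin.sum_univ_four, Matrix.diagonal, Matrix.one_apply,
      Matrix.vecHead, Matrix.vecTail]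

section
variable {Λ σ τ : Matrix (Fin 4) (Fin 4) ℝ}

lemma det_sq_one (hΛ : Λᵀ * minkEta * Λ = minkEta) : Λ.det * Λ.det = 1 := by
  have h := congrArg Matrix.det hΛ
  rw [Matrix.det_mul, Matrix.det_mul, Matrix.det_transpose, det_minkEta] at h
  nlinarith [h]

lemma Q_conj (hΛ : Λᵀ * minkEta * Λ = minkEta) (σ : Matrix (Fin 4) (Fin 4) ℝ) :
    Matrix.trace (Λ * σ * Λᵀ * minkEta * (Λ * σ * Λᵀ) * minkEta) =
      Matrix.trace (σ * minkEta * σ * minkEta) := by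
  have hΛ' : Λᵀ * (minkEta * Λ) = minkEta := by rw [← Matrix.mul_assoc]; exact hΛ
  calc Matrix.trace (Λ * σ * Λᵀ * minkEta * (Λ * σ * Λᵀ) * minkEta)
      = Matrix.trace (Λ * (σ * (Λᵀ * (minkEta * Λ)) * (σ * (Λᵀ * minkEta)))) := by
        simp only [Matrix.mul_assoc]
    _ = Matrix.trace (Λ * (σ * minkEta * (σ * (Λᵀ * minkEta)))) := by rw [hΛ']
    _ = Matrix.trace (σ * minkEta * (σ * (Λᵀ * minkEta)) * Λ) := by
        rw [Matrix.trace_mul_comm]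
    _ = Matrix.trace (σ * minkEta * σ * minkEta) := by
        simp only [Matrix.mul_assoc, hΛ']

lemma det_conj (hΛ : Λᵀ * minkEta * Λ = minkEta) (σ : Matrix (Fin 4) (Fin 4) ℝ) :
    (Λ * σ * Λᵀ).det = σ.det := by
  have h := det_sq_one hΛ
  rw [Matrix.det_mul, Matrix.det_mul, Matrix.det_transpose]
  linear_combination σ.det * h

/-- The Lorentz-orbit relation. -/
def lorRel (τ σ : Matrix (Fin 4) (Fin 4) ℝ) : Prop :=
  ∃ Λ : Matrix (Fin 4) (Fin 4) ℝ, Λᵀ * minkEta * Λ = minkEta ∧ τ = Λ * σ * Λᵀ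

lemma lorRel_trans {τ σ ρ : Matrix (Fin 4) (Fin 4) ℝ}
    (h1 : lorRel τ σ) (h2 : lorRel σ ρ) : lorRel τ ρ := by
  obtain ⟨Λ₁, hL1, h1⟩ := h1
  obtain ⟨Λ₂, hL2, h2⟩ := h2
  refine ⟨Λ₁ * Λ₂, ?_, ?_⟩
  · calc (Λ₁ * Λ₂)ᵀ * minkEta * (Λ₁ * Λ₂)
        = Λ₂ᵀ * (Λ₁ᵀ * minkEta * Λ₁) * Λ₂ := by
          rw [Matrix.transpose_mul]; simp only [Matrix.mul_assoc]
      _ = minkEta := by rw [hL1]; exact hL2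
  · rw [h1, h2]
    rw [Matrix.transpose_mul]
    simp only [Matrix.mul_assoc]

lemma eta_eta (X : Matrix (Fin 4) (Fin 4) ℝ) : minkEta * (minkEta * X) = X := by
  rw [← Matrix.mul_assoc, eta_sq, Matrix.one_mul]

lemma hetaT : minkEtaᵀ = minkEta := by
  rw [minkEta]; exact Matrix.diagonal_transpose _

lemma lorRel_symm {τ σ : Matrix (Fin 4) (Fin 4) ℝ} (h : lorRel τ σ) : lorRel σ τ := by
  obtain ⟨Λ, hL, hc⟩ := h
  have hL' : Λᵀ * (minkEta * Λ) = minkEta := by rw [← Matrix.mul_assoc]; exact hL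
  have hinv : (minkEta * Λᵀ * minkEta) * Λ = 1 := by
    calc (minkEta * Λᵀ * minkEta) * Λ = minkEta * (Λᵀ * (minkEta * Λ)) := by
          simp only [Matrix.mul_assoc]
      _ = 1 := by rw [hL']; exact eta_sq
  have hinv' : Λ * (minkEta * Λᵀ * minkEta) = 1 := mul_eq_one_comm.mp hinv
  have h3 : Λ * (minkEta * (Λᵀ * minkEta)) = 1 := by
    simpa only [Matrix.mul_assoc] using hinv'
  have k1 : Λᵀ * (minkEta * (Λ * minkEta)) = 1 := by
    rw [show Λᵀ * (minkEta * (Λ * minkEta)) = (Λᵀ * (minkEta * Λ)) * minkEta by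
      simp only [Matrix.mul_assoc], hL', eta_sq]
  have k2 : ∀ X : Matrix (Fin 4) (Fin 4) ℝ, Λᵀ * (minkEta * (Λ * X)) = minkEta * X := by
    intro X
    rw [show Λᵀ * (minkEta * (Λ * X)) = (Λᵀ * (minkEta * Λ)) * X by
      simp only [Matrix.mul_assoc], hL']
  refine ⟨minkEta * Λᵀ * minkEta, ?_, ?_⟩
  · rw [Matrix.transpose_mul, Matrix.transpose_mul, hetaT, Matrix.transpose_transpose]
    simp only [Matrix.mul_assoc]
    rw [eta_eta, h3, Matrix.mul_one]
  · rw [hc, Matrix.transpose_mul, Matrix.transpose_mul, hetaT, Matrix.transpose_transpose]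
    simp only [Matrix.mul_assoc]
    rw [k1, Matrix.mul_one, k2, eta_eta]

lemma asm_repr {σ : Matrix (Fin 4) (Fin 4) ℝ} (hσ : σᵀ = -σ) :
    σ = asm (σ 0 1) (σ 0 2) (σ 0 3) (σ 2 3) (σ 3 1) (σ 1 2) := by
  have h : ∀ i j, σ j i = -σ i j := by
    intro i j
    have := congrFun (congrFun hσ i) j
    simpa [Matrix.transpose_apply] using this
  ext i j
  fin_cases i <;> fin_cases j <;>
    simp [asm] <;>
    first
      | linarith [h 0 0]
      | linarith [h 1 1]
      | linarith [h 2 2]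
      | linarith [h 3 3]
      | linarith [h 0 1]
      | linarith [h 0 2]
      | linarith [h 0 3]
      | linarith [h 1 2]
      | linarith [h 1 3]
      | linarith [h 2 3]

lemma exists_perp (a b c : ℝ) (h : a*a+b*b+c*c = 1) :
    ∃ x y z : ℝ, x*x+y*y+z*z = 1 ∧ x*a+y*b+z*c = 0 := by
  by_cases hab : a = 0 ∧ b = 0
  · exact ⟨1, 0, 0, by norm_num, by simp [hab.1]⟩
  · have hs : 0 < a*a + b*b := by
      rcases (not_and_or.mp hab) with ha | hb
      · have : 0 < a*a := mul_self_pos.mpr ha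
        nlinarith [mul_self_nonneg b]
      · have : 0 < b*b := mul_self_pos.mpr hb
        nlinarith [mul_self_nonneg a]
    set s := Real.sqrt (a*a+b*b) with hs_def
    have hs0 : 0 < s := Real.sqrt_pos.mpr hs
    have hs2 : s * s = a*a+b*b := Real.mul_self_sqrt hs.le
    refine ⟨-b/s, a/s, 0, ?_, ?_⟩
    · calc (-b/s)*(-b/s)+(a/s)*(a/s)+(0:ℝ)*0 = (a*a+b*b)/(s*s) := by
            field_simp; ring
        _ = 1 := by rw [hs2]; exact div_self (ne_of_gt hs)
    · field_simp
      ring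

lemma norm_elec (σ : Matrix (Fin 4) (Fin 4) ℝ) :
    ‖elecPart σ‖ = Real.sqrt ((σ 0 1)^2 + (σ 0 2)^2 + (σ 0 3)^2) := by
  rw [EuclideanSpace.norm_eq]
  congr 1
  simp [elecPart, Fin.sum_univ_three, Real.norm_eq_abs, sq_abs]

lemma norm_mag (σ : Matrix (Fin 4) (Fin 4) ℝ) :
    ‖magPart σ‖ = Real.sqrt ((σ 2 3)^2 + (σ 3 1)^2 + (σ 1 2)^2) := by
  rw [EuclideanSpace.norm_eq]
  congr 1
  simp [magPart, Fin.sum_univ_three, Real.norm_eq_abs, sq_abs]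

lemma inner_em (σ : Matrix (Fin 4) (Fin 4) ℝ) :
    (inner ℝ (elecPart σ) (magPart σ) : ℝ) =
      σ 0 1 * σ 2 3 + σ 0 2 * σ 3 1 + σ 0 3 * σ 1 2 := by
  simp [elecPart, magPart, PiLp.inner_apply, Fin.sum_univ_three, RCLike.inner_apply, conj_trivial]
  ring

lemma trace_fin_four (A : Matrix (Fin 4) (Fin 4) ℝ) :
    Matrix.trace A = A 0 0 + A 1 1 + A 2 2 + A 3 3 := by
  simp [Matrix.trace, Fin.sum_univ_four]

lemma Q_asm (a b c d f g : ℝ) :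
    Matrix.trace (asm a b c d f g * minkEta * asm a b c d f g * minkEta) =
      2*(a^2+b^2+c^2) - 2*(d^2+f^2+g^2) := by
  rw [asm, minkEta_eq, mul_fin_four, mul_fin_four, mul_fin_four, trace_fin_four]
  simp only [Matrix.of_apply, Matrix.cons_val, Matrix.cons_val_zero, Matrix.cons_val_one, Matrix.head_cons]
  ring

lemma det_asm (a b c d f g : ℝ) :
    (asm a b c d f g).det = (a*d+b*f+c*g)^2 := by
  have h3 : ((3 : Fin 4) : ℕ) = 3 := rfl
  rw [asm, Matrix.det_succ_row_zero]
  simp [Fin.sum_univ_four, Matrix.det_fin_three, Fin.succAbove, Matrix.vecHead, Matrix.vecTail]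
  ring

lemma asm_congr {a b c d f g a' b' c' d' f' g' : ℝ}
    (ha : a = a') (hb : b = b') (hc : c = c') (hd : d = d') (hf : f = f') (hg : g = g') :
    asm a b c d f g = asm a' b' c' d' f' g' := by
  subst ha; subst hb; subst hc; subst hd; subst hf; subst hg; rfl

lemma sigma0_eq : sigma0 = asm 0 (-1) 0 0 1 0 := by
  ext i j
  fin_cases i <;> fin_cases j <;> norm_num [sigma0, asm]

lemma transpose_asm (a b c d f g : ℝ) :
    (asm a b c d f g)ᵀ = -(asm a b c d f g) := by
  ext i j
  fin_cases i <;> fin_cases j <;> norm_num [asm]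

set_option maxHeartbeats 1000000 in
lemma set_mem_conditions (a b c d f g : ℝ)
    (hr : a^2 + b^2 + c^2 = d^2 + f^2 + g^2)
    (hε : (a*d + b*f + c*g)^2 = 1) :
    lorRel (asm a b c d f g) sigma0 := by
  have hrepr : asm a b c d f g = asm a b c d f g := rfl
  -- Step 1: rotate into the canonical plane
  have step1 : ∃ p q : ℝ, q^2 - p^2 = a*d+b*f+c*g ∧ lorRel (asm p q 0 (-p) q 0) (asm a b c d f g) := by
    by_cases hw : (a-d)^2+(b-f)^2+(c-g)^2 = 0
    · -- e = m case
      have had : a = d := by nlinarith [sq_nonneg (a-d), sq_nonneg (b-f), sq_nonneg (c-g)]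
      have hbf : b = f := by nlinarith [sq_nonneg (a-d), sq_nonneg (b-f), sq_nonneg (c-g)]
      have hcg : c = g := by nlinarith [sq_nonneg (a-d), sq_nonneg (b-f), sq_nonneg (c-g)]
      subst had; subst hbf; subst hcg
      have hone : a*a+b*b+c*c = 1 := by nlinarith [sq_nonneg (a*a+b*b+c*c - 1)]
      obtain ⟨x, y, z, hxyz, hdot⟩ := exists_perp a b c hone
      refine ⟨0, 1, by linear_combination -hone, rotM x y z a b c, rot_lor hxyz hone hdot, ?_⟩
      rw [hrepr, rot_conj a b c a b c hxyz hone hdot]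
      apply asm_congr
      · linear_combination -hdot
      · linear_combination -hone
      · ring
      · linear_combination -hdot
      · linear_combination -hone
      · ring
    · by_cases hu : (a+d)^2+(b+f)^2+(c+g)^2 = 0
      · -- e = -m case
        have had : a = -d := by nlinarith [sq_nonneg (a+d), sq_nonneg (b+f), sq_nonneg (c+g)]
        have hbf : b = -f := by nlinarith [sq_nonneg (a+d), sq_nonneg (b+f), sq_nonneg (c+g)]
        have hcg : c = -g := by nlinarith [sq_nonneg (a+d), sq_nonneg (b+f), sq_nonneg (c+g)]
        subst had; subst hbf; subst hcg
        have hone : (-d)*(-d)+(-f)*(-f)+(-g)*(-g) = 1 := by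
          nlinarith [hε, sq_nonneg (d*d+f*f+g*g-1), sq_nonneg d, sq_nonneg f, sq_nonneg g,
            mul_self_nonneg (d*d+f*f+g*g)]
        obtain ⟨x, y, z, hxyz, hdot⟩ := exists_perp (-d) (-f) (-g) hone
        have hdot' : (-d)*x+(-f)*y+(-g)*z = 0 := by linear_combination hdot
        refine ⟨1, 0, by linear_combination hone,
          rotM (-d) (-f) (-g) x y z, rot_lor hone hxyz hdot', ?_⟩
        rw [hrepr, rot_conj (-d) (-f) (-g) d f g hone hxyz hdot']
        apply asm_congr
        · linear_combination -hone
        · linear_combination -hdot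
        · ring
        · linear_combination hone
        · linear_combination hdot'
        · ring
      · -- generic case
        have hws : 0 < (a-d)^2+(b-f)^2+(c-g)^2 := lt_of_le_of_ne (by positivity) (Ne.symm hw)
        have hus : 0 < (a+d)^2+(b+f)^2+(c+g)^2 := lt_of_le_of_ne (by positivity) (Ne.symm hu)
        set W := Real.sqrt ((a-d)^2+(b-f)^2+(c-g)^2) with hW_def
        set U := Real.sqrt ((a+d)^2+(b+f)^2+(c+g)^2) with hU_def
        have hW0 : 0 < W := Real.sqrt_pos.mpr hws
        have hU0 : 0 < U := Real.sqrt_pos.mpr hus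
        have hW2 : W*W = (a-d)^2+(b-f)^2+(c-g)^2 := Real.mul_self_sqrt hws.le
        have hU2 : U*U = (a+d)^2+(b+f)^2+(c+g)^2 := Real.mul_self_sqrt hus.le
        have hWne : W ≠ 0 := ne_of_gt hW0
        have hUne : U ≠ 0 := ne_of_gt hU0
        have h1 : ((a-d)/W)*((a-d)/W)+((b-f)/W)*((b-f)/W)+((c-g)/W)*((c-g)/W) = 1 := by
          field_simp
          first
            | ring1
            | linear_combination hW2 - hr
            | linear_combination -hW2 + hr
            | linear_combination hU2 - hr
            | linear_combination -hU2 + hr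
            | linear_combination -hW2 - hr
            | linear_combination hW2 + hr
            | linear_combination -hU2 - hr
            | linear_combination hU2 + hr
            | linear_combination hr
            | linear_combination -hr
            | linear_combination hW2
            | linear_combination -hW2
            | linear_combination hU2
            | linear_combination -hU2
        have h2 : ((a+d)/U)*((a+d)/U)+((b+f)/U)*((b+f)/U)+((c+g)/U)*((c+g)/U) = 1 := by
          field_simp
          first
            | ring1
            | linear_combination hW2 - hr
            | linear_combination -hW2 + hr
            | linear_combination hU2 - hr
            | linear_combination -hU2 + hr
            | linear_combination -hW2 - hr
            | linear_combination hW2 + hr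
            | linear_combination -hU2 - hr
            | linear_combination hU2 + hr
            | linear_combination hr
            | linear_combination -hr
            | linear_combination hW2
            | linear_combination -hW2
            | linear_combination hU2
            | linear_combination -hU2
        have h12 : ((a-d)/W)*((a+d)/U)+((b-f)/W)*((b+f)/U)+((c-g)/W)*((c+g)/U) = 0 := by
          field_simp
          first
            | ring1
            | linear_combination hW2 - hr
            | linear_combination -hW2 + hr
            | linear_combination hU2 - hr
            | linear_combination -hU2 + hr
            | linear_combination -hW2 - hr
            | linear_combination hW2 + hr
            | linear_combination -hU2 - hr
            | linear_combination hU2 + hr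
            | linear_combination hr
            | linear_combination -hr
            | linear_combination hW2
            | linear_combination -hW2
            | linear_combination hU2
            | linear_combination -hU2
        refine ⟨W/2, U/2, by linear_combination hU2/4 - hW2/4, rotM ((a-d)/W) ((b-f)/W) ((c-g)/W) ((a+d)/U) ((b+f)/U) ((c+g)/U), rot_lor h1 h2 h12, ?_⟩
        rw [hrepr, rot_conj a b c d f g h1 h2 h12]
        apply asm_congr <;>
          · field_simp
            first
            | ring1
            | linear_combination hW2 - hr
            | linear_combination -hW2 + hr
            | linear_combination hU2 - hr
            | linear_combination -hU2 + hr
            | linear_combination -hW2 - hr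
            | linear_combination hW2 + hr
            | linear_combination -hU2 - hr
            | linear_combination hU2 + hr
            | linear_combination hr
            | linear_combination -hr
            | linear_combination hW2
            | linear_combination -hW2
            | linear_combination hU2
            | linear_combination -hU2
  obtain ⟨p, q, hpq, hrel1⟩ := step1
  have hε2 : (q^2-p^2)^2 = 1 := by rw [hpq]; exact hε
  have hcases : q^2-p^2 = 1 ∨ q^2-p^2 = -1 := by
    have hfac : (q^2-p^2-1)*(q^2-p^2+1) = 0 := by linear_combination hε2
    rcases mul_eq_zero.mp hfac with h | h
    · left; linarith
    · right; linarith
  rcases hcases with h1 | h1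
  · -- ε = 1 : boost with C = q, S = -p, then parity
    have hCS : q*q - (-p)*(-p) = 1 := by linear_combination h1
    have rel2 : lorRel (asm 0 1 0 0 1 0) (asm p q 0 (-p) q 0) := by
      refine ⟨_, boost_lor hCS, ?_⟩
      rw [boost_conj p q 0 (-p) q 0 hCS]
      apply asm_congr <;>
        first
          | ring1
          | linear_combination h1
          | linear_combination -h1
    have rel3 : lorRel sigma0 (asm 0 1 0 0 1 0) := by
      refine ⟨minkEta, eta_lor, ?_⟩
      rw [eta_conj 0 1 0 0 1 0, sigma0_eq]
      apply asm_congr <;> norm_num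
    exact lorRel_symm (lorRel_trans (lorRel_trans rel3 rel2) hrel1)
  · -- ε = -1 : boost with C = p, S = -q, then rotate
    have hCS : p*p - (-q)*(-q) = 1 := by linear_combination -h1
    have rel2 : lorRel (asm 1 0 0 (-1) 0 0) (asm p q 0 (-p) q 0) := by
      refine ⟨_, boost_lor hCS, ?_⟩
      rw [boost_conj p q 0 (-p) q 0 hCS]
      apply asm_congr <;>
        first
          | ring1
          | linear_combination h1
          | linear_combination -h1
    have rel3 : lorRel sigma0 (asm 1 0 0 (-1) 0 0) := by
      refine ⟨rotM 0 (-1) 0 (-1) 0 0, rot_lor (by norm_num) (by norm_num) (by norm_num), ?_⟩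
      rw [rot_conj 1 0 0 (-1) 0 0 (by norm_num) (by norm_num) (by norm_num), sigma0_eq]
      apply asm_congr <;> norm_num
    exact lorRel_symm (lorRel_trans (lorRel_trans rel3 rel2) hrel1)

theorem lorentz_orbit_of_sigma0 :
    {σ : Matrix (Fin 4) (Fin 4) ℝ | σᵀ = -σ ∧ ‖elecPart σ‖ = ‖magPart σ‖ ∧
        (inner ℝ (elecPart σ) (magPart σ) : ℝ) ^ 2 = 1} =
    {σ : Matrix (Fin 4) (Fin 4) ℝ |
        ∃ Λ : Matrix (Fin 4) (Fin 4) ℝ, Λᵀ * minkEta * Λ = minkEta ∧ σ = Λ * sigma0 * Λᵀ} := by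
  ext σ
  simp only [Set.mem_setOf_eq]
  constructor
  · rintro ⟨hA, hN, hI⟩
    have hr : (σ 0 1)^2 + (σ 0 2)^2 + (σ 0 3)^2 = (σ 2 3)^2 + (σ 3 1)^2 + (σ 1 2)^2 := by
      rw [norm_elec, norm_mag] at hN
      have h1 : (0:ℝ) ≤ (σ 0 1)^2 + (σ 0 2)^2 + (σ 0 3)^2 := by positivity
      have h2 : (0:ℝ) ≤ (σ 2 3)^2 + (σ 3 1)^2 + (σ 1 2)^2 := by positivity
      calc (σ 0 1)^2 + (σ 0 2)^2 + (σ 0 3)^2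
          = Real.sqrt ((σ 0 1)^2 + (σ 0 2)^2 + (σ 0 3)^2) ^ 2 := (Real.sq_sqrt h1).symm
        _ = Real.sqrt ((σ 2 3)^2 + (σ 3 1)^2 + (σ 1 2)^2) ^ 2 := by rw [hN]
        _ = (σ 2 3)^2 + (σ 3 1)^2 + (σ 1 2)^2 := Real.sq_sqrt h2
    have hI' : (σ 0 1 * σ 2 3 + σ 0 2 * σ 3 1 + σ 0 3 * σ 1 2)^2 = 1 := by
      rw [inner_em] at hI
      exact hI
    have h := set_mem_conditions (σ 0 1) (σ 0 2) (σ 0 3) (σ 2 3) (σ 3 1) (σ 1 2) hr hI'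
    rw [asm_repr hA]
    exact h
  · rintro ⟨Λ, hΛ, rfl⟩
    have hs0T : sigma0ᵀ = -sigma0 := by rw [sigma0_eq, transpose_asm]
    have hA : (Λ * sigma0 * Λᵀ)ᵀ = -(Λ * sigma0 * Λᵀ) := by
      rw [Matrix.transpose_mul, Matrix.transpose_mul, Matrix.transpose_transpose, hs0T]
      simp only [Matrix.mul_neg, Matrix.neg_mul, Matrix.mul_assoc]
    refine ⟨hA, ?_, ?_⟩
    · -- norms equal via trace invariant
      set τ := Λ * sigma0 * Λᵀ with hτ
      have hrepr : τ = asm (τ 0 1) (τ 0 2) (τ 0 3) (τ 2 3) (τ 3 1) (τ 1 2) := asm_repr hA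
      have hQ : Matrix.trace (τ * minkEta * τ * minkEta) = 0 := by
        rw [hτ, Q_conj hΛ, sigma0_eq, Q_asm]
        norm_num
      rw [hrepr, Q_asm] at hQ
      rw [norm_elec, norm_mag]
      congr 1
      linarith
    · set τ := Λ * sigma0 * Λᵀ with hτ
      have hrepr : τ = asm (τ 0 1) (τ 0 2) (τ 0 3) (τ 2 3) (τ 3 1) (τ 1 2) := asm_repr hA
      have hD : τ.det = 1 := by
        rw [hτ, det_conj hΛ, sigma0_eq, det_asm]
        norm_num
      rw [hrepr, det_asm] at hD
      rw [inner_em]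
      exact hD
end
end

section
/- Let σ₀ be the real antisymmetric 4×4 matrix with entries σ₀^{02} = −1, σ₀^{13} = −1, σ₀^{20} = 1, σ₀^{31} = 1 and all other entries zero. Then the orbit of σ₀ under the rotation subgroup, i.e. the set { Λ_R σ₀ Λ_Rᵗ : R ∈ O(3) } where Λ_R = diag(1, R) ∈ GL(4,ℝ), equals the set of real antisymmetric 4×4 matrices σ with |e(σ)| = 1 and m(σ) = e(σ) or m(σ) = −e(σ). -/
open Matrix

/-- `Λ_R = diag(1, R)`, the rotation `R` embedded in `GL(4,ℝ)`. -/
noncomputable def rotBlock (R : Matrix (Fin 3) (Fin 3) ℝ) : Matrix (Fin 4) (Fin 4) ℝ :=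
  Matrix.reindex finSumFinEquiv finSumFinEquiv
    (Matrix.fromBlocks (1 : Matrix (Fin 1) (Fin 1) ℝ) 0 0 R)

/-!
The map `σ ↦ (e(σ), m(σ))` identifies antisymmetric matrices with pairs of vectors, and
conjugation by `Λ_R` acts on it by `e ↦ R e`, `m ↦ cof(R) m`; for orthogonal `R` the cofactor
matrix is `det R • R`. Since `m(σ₀) = -e(σ₀)` is a unit vector, the orbit consists of matrices with
`|e| = 1` and `m = -(det R) e`. Conversely, `O(3)` maps `e(σ₀)` to any unit vector by a matrix of
either determinant, which then reproduces both parts of the target.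
-/

def ofElecMag (e m : EuclideanSpace ℝ (Fin 3)) : Matrix (Fin 4) (Fin 4) ℝ :=
  !![0, e 0, e 1, e 2; -e 0, 0, m 2, -m 1; -e 1, -m 2, 0, m 0; -e 2, m 1, -m 0, 0]

lemma eq_ofElecMag {σ : Matrix (Fin 4) (Fin 4) ℝ} (hσ : σᵀ = -σ) :
    σ = ofElecMag (elecPart σ) (magPart σ) := by
  have h : ∀ i j, σ j i = -σ i j := fun i j => congrFun (congrFun hσ i) j
  ext i j
  fin_cases i <;> fin_cases j <;> simp [ofElecMag, elecPart, magPart] <;>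
    linarith [h 0 0, h 1 1, h 2 2, h 3 3, h 0 1, h 0 2, h 0 3, h 1 2, h 1 3, h 2 3]

lemma transpose_mul_mul_transpose_of_transpose_eq_neg {n α : Type*} [Fintype n] [CommRing α]
    (A : Matrix n n α) {σ : Matrix n n α} (hσ : σᵀ = -σ) : (A * σ * Aᵀ)ᵀ = -(A * σ * Aᵀ) := by
  rw [transpose_mul, transpose_mul, transpose_transpose, hσ, ← Matrix.mul_assoc, Matrix.mul_neg,
    Matrix.neg_mul]

section Orthogonal

variable {ι : Type*} [Fintype ι] [DecidableEq ι]

lemma det_eq_one_or_neg_one_of_transpose_mul_self {R : Matrix ι ι ℝ} (hR : Rᵀ * R = 1) :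
    R.det = 1 ∨ R.det = -1 := by
  apply mul_self_eq_one_iff.mp
  simpa [det_transpose] using congrArg det hR

lemma transpose_adjugate_of_transpose_mul_self {R : Matrix ι ι ℝ} (hR : Rᵀ * R = 1) :
    R.adjugateᵀ = R.det • R := by
  have hR' : R * Rᵀ = 1 := mul_eq_one_comm.mp hR
  rw [← transpose_transpose (R.det • R), transpose_smul]
  congr 1
  calc R.adjugate = R.adjugate * (R * Rᵀ) := by rw [hR', mul_one]
    _ = R.det • Rᵀ := by rw [← Matrix.mul_assoc, adjugate_mul, smul_mul, Matrix.one_mul]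

lemma norm_toEuclideanLin_of_transpose_mul_self {R : Matrix ι ι ℝ} (hR : Rᵀ * R = 1)
    (v : EuclideanSpace ℝ ι) : ‖toEuclideanLin R v‖ = ‖v‖ := by
  refine (pow_left_inj₀ (norm_nonneg _) (norm_nonneg _) two_ne_zero).mp ?_
  simp only [← real_inner_self_eq_norm_sq, EuclideanSpace.inner_eq_star_dotProduct, toLpLin_apply]
  simp [dotProduct_mulVec, vecMul_mulVec, hR]

lemma exists_orthogonal_toEuclideanLin_single_eq (j : ι) {u : EuclideanSpace ℝ ι} (hu : ‖u‖ = 1) :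
    ∃ R : Matrix ι ι ℝ, Rᵀ * R = 1 ∧ toEuclideanLin R (EuclideanSpace.single j 1) = u := by
  have hu' : Orthonormal ℝ (({j} : Set ι).domRestrict fun _ => u) := by
    refine ⟨fun _ => hu, fun a b hab => absurd (Subtype.ext ?_) hab⟩
    rw [a.2, b.2]
  obtain ⟨b, hb⟩ := hu'.exists_orthonormalBasis_extension_of_card_eq (by simp)
  refine ⟨(EuclideanSpace.basisFun ι ℝ).toBasis.toMatrix b, ?_, ?_⟩
  · simpa [conjTranspose_eq_transpose_of_trivial] using
      (EuclideanSpace.basisFun ι ℝ).toMatrix_orthonormalBasis_conjTranspose_mul_self b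
  · ext i
    simp [toLpLin_apply, Module.Basis.toMatrix_apply, hb j (Set.mem_singleton j)]

lemma exists_orthogonal_det_eq_toEuclideanLin_single_eq {j k : ι} (hjk : j ≠ k)
    {u : EuclideanSpace ℝ ι} (hu : ‖u‖ = 1) {s : ℝ} (hs : s = 1 ∨ s = -1) :
    ∃ R : Matrix ι ι ℝ, Rᵀ * R = 1 ∧ R.det = s ∧
      toEuclideanLin R (EuclideanSpace.single j 1) = u := by
  obtain ⟨R, hR, hRu⟩ := exists_orthogonal_toEuclideanLin_single_eq j hu
  by_cases hdet : R.det = s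
  · exact ⟨R, hR, hdet, hRu⟩
  -- Flipping the `k`-th column changes the sign of the determinant and keeps the `j`-th column.
  set d : ι → ℝ := Function.update 1 k (-1)
  have hd : ∀ i, d i * d i = 1 := fun i => by
    by_cases hi : i = k <;> simp [d, hi]
  refine ⟨R * diagonal d, ?_, ?_, ?_⟩
  · rw [transpose_mul, diagonal_transpose, Matrix.mul_assoc, ← Matrix.mul_assoc Rᵀ, hR,
      Matrix.one_mul, diagonal_mul_diagonal, funext hd, diagonal_one]
  · have hdet_d : (diagonal d).det = -1 := by
      rw [det_diagonal, Finset.prod_update_of_mem (Finset.mem_univ k)]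
      simp
    rw [det_mul, hdet_d]
    rcases hs with rfl | rfl <;> rcases det_eq_one_or_neg_one_of_transpose_mul_self hR with h | h <;>
      simp_all
  · rw [← hRu]
    ext i
    simp [toLpLin_apply, d, hjk]

end Orthogonal

section RotBlock

variable (R : Matrix (Fin 3) (Fin 3) ℝ)

@[simp] lemma rotBlock_zero_zero : rotBlock R 0 0 = 1 := rfl

@[simp] lemma rotBlock_zero_succ (j : Fin 3) : rotBlock R 0 j.succ = 0 := by
  fin_cases j <;> rfl

@[simp] lemma rotBlock_succ_zero (i : Fin 3) : rotBlock R i.succ 0 = 0 := by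
  fin_cases i <;> rfl

@[simp] lemma rotBlock_succ_succ (i j : Fin 3) : rotBlock R i.succ j.succ = R i j := by
  fin_cases i <;> fin_cases j <;> rfl

lemma rotBlock_eq : rotBlock R =
    !![1, 0, 0, 0; 0, R 0 0, R 0 1, R 0 2; 0, R 1 0, R 1 1, R 1 2; 0, R 2 0, R 2 1, R 2 2] := by
  ext i j
  fin_cases i <;> fin_cases j <;> rfl

lemma elecPart_apply (σ : Matrix (Fin 4) (Fin 4) ℝ) (i : Fin 3) : elecPart σ i = σ 0 i.succ := by
  fin_cases i <;> rfl

lemma elecPart_rotBlock_mul_mul_transpose (σ : Matrix (Fin 4) (Fin 4) ℝ) :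
    elecPart (rotBlock R * σ * (rotBlock R)ᵀ) = toEuclideanLin R (elecPart σ) := by
  ext i
  simp [toLpLin_apply, elecPart_apply, mul_apply, Fin.sum_univ_succ, mulVec, dotProduct, mul_comm]

lemma magPart_rotBlock_mul_mul_transpose {σ : Matrix (Fin 4) (Fin 4) ℝ} (hσ : σᵀ = -σ) :
    magPart (rotBlock R * σ * (rotBlock R)ᵀ) = toEuclideanLin R.adjugateᵀ (magPart σ) := by
  rw [eq_ofElecMag hσ, rotBlock_eq]
  ext i
  fin_cases i <;>
    simp [toLpLin_apply, magPart, ofElecMag, mul_apply, Fin.sum_univ_succ, mulVec, dotProduct,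
      adjugate_fin_three] <;>
    ring

end RotBlock

lemma transpose_sigma0 : sigma0ᵀ = -sigma0 := by
  ext i j
  fin_cases i <;> fin_cases j <;> simp [sigma0]

lemma elecPart_sigma0 : elecPart sigma0 = -EuclideanSpace.single 1 1 := by
  ext i
  fin_cases i <;> simp [elecPart, sigma0]

lemma magPart_sigma0 : magPart sigma0 = EuclideanSpace.single 1 1 := by
  ext i
  fin_cases i <;> simp [magPart, sigma0]

lemma magPart_rotBlock_sigma0 {R : Matrix (Fin 3) (Fin 3) ℝ} (hR : Rᵀ * R = 1) :
    magPart (rotBlock R * sigma0 * (rotBlock R)ᵀ) =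
      -R.det • elecPart (rotBlock R * sigma0 * (rotBlock R)ᵀ) := by
  rw [magPart_rotBlock_mul_mul_transpose R transpose_sigma0, elecPart_rotBlock_mul_mul_transpose,
    transpose_adjugate_of_transpose_mul_self hR, magPart_sigma0, elecPart_sigma0]
  simp

theorem rotation_orbit_of_sigma0 :
    {σ : Matrix (Fin 4) (Fin 4) ℝ |
        ∃ R : Matrix (Fin 3) (Fin 3) ℝ, Rᵀ * R = 1 ∧
          σ = rotBlock R * sigma0 * (rotBlock R)ᵀ} =
    {σ : Matrix (Fin 4) (Fin 4) ℝ | σᵀ = -σ ∧ ‖elecPart σ‖ = 1 ∧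
        (magPart σ = elecPart σ ∨ magPart σ = -elecPart σ)} := by
  ext σ
  constructor
  · rintro ⟨R, hR, rfl⟩
    refine ⟨transpose_mul_mul_transpose_of_transpose_eq_neg _ transpose_sigma0, ?_, ?_⟩
    · rw [elecPart_rotBlock_mul_mul_transpose, norm_toEuclideanLin_of_transpose_mul_self hR,
        elecPart_sigma0, norm_neg, PiLp.norm_single, norm_one]
    · rw [magPart_rotBlock_sigma0 hR]
      rcases det_eq_one_or_neg_one_of_transpose_mul_self hR with h | h <;> simp [h]
  · rintro ⟨hσ, he, hm⟩
    obtain ⟨s, hs, hms⟩ : ∃ s : ℝ, (s = 1 ∨ s = -1) ∧ magPart σ = -s • elecPart σ := by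
      rcases hm with hm | hm
      · exact ⟨-1, Or.inr rfl, by simpa using hm⟩
      · exact ⟨1, Or.inl rfl, by simpa using hm⟩
    obtain ⟨R, hR, hdet, hRe⟩ := exists_orthogonal_det_eq_toEuclideanLin_single_eq
      (show (1 : Fin 3) ≠ 0 by decide) (u := -elecPart σ) (by rwa [norm_neg]) hs
    have heR : elecPart (rotBlock R * sigma0 * (rotBlock R)ᵀ) = elecPart σ := by
      rw [elecPart_rotBlock_mul_mul_transpose, elecPart_sigma0, map_neg, hRe, neg_neg]
    refine ⟨R, hR, ?_⟩
    rw [eq_ofElecMag hσ, eq_ofElecMag (transpose_mul_mul_transpose_of_transpose_eq_neg _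
      transpose_sigma0), magPart_rotBlock_sigma0 hR, heR, hdet, hms]
end

section
/- Let X be a locally compact Hausdorff space and H an infinite-dimensional separable complex Hilbert space, and let A = C₀(X, 𝒦(H)) be the C*-algebra of norm-continuous functions from X to the compact operators 𝒦(H) that vanish at infinity. Then the map sending a closed subset C ⊆ X to J_C = { f ∈ A : f(x) = 0 for all x ∈ C } is a bijection between the closed subsets of X and the norm-closed two-sided ideals of A. -/
open scoped ZeroAtInfty InnerProductSpace
open Filter Set Function

set_option linter.unusedSectionVars false
set_option maxHeartbeats 1000000
set_option synthInstance.maxHeartbeats 400000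

/-- The compact operators on `H`, as a non-unital subalgebra of the bounded operators. -/
noncomputable def compactsAlg (H : Type*) [NormedAddCommGroup H] [NormedSpace ℂ H] :
    NonUnitalSubalgebra ℂ (H →L[ℂ] H) where
  carrier := {T : H →L[ℂ] H | IsCompactOperator T}
  add_mem' := fun ha hb => ha.add hb
  zero_mem' := isCompactOperator_zero
  smul_mem' := fun c _ h => h.smul c
  mul_mem' := fun {a b} ha _ => by
    first
    | exact ha.comp_clm b
    | simpa [ContinuousLinearMap.mul_def, ContinuousLinearMap.coe_comp'] using ha.comp_clm b

/-- `S` is a norm-closed two-sided ideal: a closed set which is a linear subspace `J`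
with `a·J ⊆ J` and `J·a ⊆ J` for all `a`. -/
def IsClosedTwoSidedIdeal {A : Type*} [NonUnitalNonAssocSemiring A] [Module ℂ A]
    [TopologicalSpace A] (S : Set A) : Prop :=
  IsClosed S ∧ (∃ J : Submodule ℂ A, (J : Set A) = S) ∧
    ∀ a b : A, b ∈ S → a * b ∈ S ∧ b * a ∈ S

namespace ClosedIdealsAux

section Hilbert

variable {H : Type*} [NormedAddCommGroup H] [InnerProductSpace ℂ H] [CompleteSpace H]

@[reducible] noncomputable def compactsAlgNormedSpace : NormedSpace ℂ ↥(compactsAlg H) where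
  norm_smul_le c x := norm_smul_le c (x : H →L[ℂ] H)

attribute [local instance] compactsAlgNormedSpace

lemma compactsAlgNormSMulClass : NormSMulClass ℂ ↥(compactsAlg H) :=
  ⟨fun c x => norm_smul c (x : H →L[ℂ] H)⟩

attribute [local instance] compactsAlgNormSMulClass

/-- rank one operator `z ↦ ⟪w, z⟫ • v`. -/
noncomputable def rk (v w : H) : H →L[ℂ] H :=
  (ContinuousLinearMap.toSpanSingleton ℂ v).comp (innerSL ℂ w)

lemma rk_apply (v w z : H) : rk v w z = (⟪w, z⟫_ℂ) • v := rfl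

lemma rk_compact (v w : H) : IsCompactOperator (rk v w) := by
  refine ⟨(fun c : ℂ => c • v) '' Metric.closedBall 0 ‖w‖,
    ((isCompact_closedBall 0 ‖w‖).image (by continuity)), ?_⟩
  have : Metric.ball (0 : H) 1 ⊆ (rk v w) ⁻¹' ((fun c : ℂ => c • v) '' Metric.closedBall 0 ‖w‖) := by
    intro z hz
    refine ⟨⟪w, z⟫_ℂ, ?_, rfl⟩
    simp only [Metric.mem_closedBall, Metric.mem_ball, dist_zero_right] at *
    calc ‖⟪w, z⟫_ℂ‖ ≤ ‖w‖ * ‖z‖ := norm_inner_le_norm w z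
    _ ≤ ‖w‖ * 1 := by nlinarith [norm_nonneg w, norm_nonneg z, hz.le]
    _ = ‖w‖ := mul_one _
  exact Filter.mem_of_superset (Metric.ball_mem_nhds 0 one_pos) this

lemma rk_norm_le (v w : H) : ‖rk v w‖ ≤ ‖v‖ * ‖w‖ := by
  refine ContinuousLinearMap.opNorm_le_bound _ (by positivity) fun z => ?_
  rw [rk_apply, norm_smul]
  calc ‖⟪w, z⟫_ℂ‖ * ‖v‖ ≤ ‖w‖ * ‖z‖ * ‖v‖ :=
        mul_le_mul_of_nonneg_right (norm_inner_le_norm w z) (norm_nonneg v)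
  _ = ‖v‖ * ‖w‖ * ‖z‖ := by ring

/-- rank one as an element of compactsAlg. -/
noncomputable def rkK (v w : H) : ↥(compactsAlg H) := ⟨rk v w, rk_compact v w⟩

lemma rkK_coe (v w : H) : ((rkK v w : ↥(compactsAlg H)) : H →L[ℂ] H) = rk v w := rfl

lemma rkK_ne_zero {v : H} (hv : v ≠ 0) : rkK (H := H) v v ≠ 0 := by
  intro h
  have h2 : rk v v v = 0 := by
    have := congrArg (fun k : ↥(compactsAlg H) => (k : H →L[ℂ] H) v) h
    simpa [rkK_coe] using this
  rw [rk_apply] at h2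
  rcases smul_eq_zero.mp h2 with h3 | h3
  · exact hv (inner_self_eq_zero.mp h3)
  · exact hv h3

lemma exists_finrank_approx (T : H →L[ℂ] H) (hT : IsCompactOperator T) {δ : ℝ} (hδ : 0 < δ) :
    ∃ (n : ℕ) (v w : Fin n → H), ‖T - ∑ i, rk (v i) (w i)‖ ≤ δ := by
  obtain ⟨M, hM, hTM⟩ := hT.image_closedBall_subset_compact (𝕜₁ := ℂ) 1
  obtain ⟨t, ht, hcov⟩ := Metric.totallyBounded_iff.mp hM.totallyBounded δ hδ
  set U : Submodule ℂ H := Submodule.span ℂ t with hU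
  haveI : FiniteDimensional ℂ U := FiniteDimensional.span_of_finite ℂ ht
  haveI : CompleteSpace U := FiniteDimensional.complete ℂ U
  set b := stdOrthonormalBasis ℂ U with hb
  set n := Module.finrank ℂ U with hn
  refine ⟨n, fun i => (b i : H), fun i => ContinuousLinearMap.adjoint T (b i : H), ?_⟩
  set P : H →L[ℂ] H := U.subtypeL.comp (U.orthogonalProjectionOnto) with hP
  have hPsum : ∀ z : H, P (T z) = (∑ i, rk ((b i : H)) (ContinuousLinearMap.adjoint T (b i : H))) z := by
    intro z
    have := b.orthogonalProjectionOnto_apply_eq_sum (T z)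
    have hcoe := congrArg (Submodule.subtype U) this
    simp only [map_sum, map_smul] at hcoe
    calc P (T z) = (U.orthogonalProjectionOnto (T z) : H) := rfl
    _ = ∑ i, ⟪(b i : H), T z⟫_ℂ • (b i : H) := by
        rw [show ((U.orthogonalProjectionOnto (T z) : H)) = U.subtype (U.orthogonalProjectionOnto (T z)) from rfl, hcoe]
        rfl
    _ = _ := by
        rw [ContinuousLinearMap.sum_apply]
        refine Finset.sum_congr rfl fun i _ => ?_
        rw [rk_apply, ContinuousLinearMap.adjoint_inner_left]
  have key : ∀ z : H, ‖z‖ ≤ 1 → ‖T z - P (T z)‖ ≤ δ := by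
    intro z hz
    have hmem : T z ∈ ⋃ y ∈ t, Metric.ball y δ :=
      hcov (hTM ⟨z, by simpa [Metric.mem_closedBall, dist_zero_right] using hz, rfl⟩)
    simp only [Set.mem_iUnion, Metric.mem_ball] at hmem
    obtain ⟨y, hyt, hy⟩ := hmem
    have hyU : y ∈ U := Submodule.subset_span hyt
    have : ‖T z - P (T z)‖ ≤ ‖T z - y‖ := by
      have hmin : ‖T z - (U.orthogonalProjectionOnto (T z) : H)‖ = ⨅ x : U, ‖T z - x‖ :=
        Submodule.starProjection_minimal (U := U) (T z)
      have : ‖T z - (U.orthogonalProjectionOnto (T z) : H)‖ ≤ ‖T z - (⟨y, hyU⟩ : U)‖ := by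
        rw [hmin]
        exact ciInf_le ⟨0, by rintro _ ⟨x, rfl⟩; positivity⟩ _
      exact this
    rw [dist_eq_norm] at hy
    linarith
  refine ContinuousLinearMap.opNorm_le_bound _ hδ.le fun z => ?_
  rcases eq_or_ne z 0 with rfl | hz
  · simp
  · have hzpos : (0:ℝ) < ‖z‖ := norm_pos_iff.mpr hz
    set Q := T - ∑ i, rk ((b i : H)) (ContinuousLinearMap.adjoint T (b i : H)) with hQ
    have hnc : ‖((‖z‖ : ℂ))⁻¹‖ = ‖z‖⁻¹ := by
      rw [norm_inv, Complex.norm_real, Real.norm_eq_abs, abs_of_nonneg (norm_nonneg z)]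
    have h1 : ‖((‖z‖ : ℂ))⁻¹ • z‖ ≤ 1 := by
      rw [norm_smul, hnc, inv_mul_cancel₀ hzpos.ne']
    have h4 : ‖Q (((‖z‖ : ℂ))⁻¹ • z)‖ ≤ δ := by
      have := hPsum (((‖z‖ : ℂ))⁻¹ • z)
      rw [hQ, ContinuousLinearMap.sub_apply, ← this]
      exact key _ h1
    rw [map_smul, norm_smul, hnc] at h4
    have := mul_le_mul_of_nonneg_left h4 hzpos.le
    rw [← mul_assoc, mul_inv_cancel₀ hzpos.ne', one_mul] at this
    calc ‖Q z‖ ≤ ‖z‖ * δ := this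
    _ = δ * ‖z‖ := mul_comm _ _

end Hilbert

section C0

variable {X : Type*} [TopologicalSpace X] {E : Type*} [NormedAddCommGroup E] [NormedSpace ℂ E]

/-- multiply a compactly supported scalar function by a constant vector -/
noncomputable def cpt (φ : C(X, ℝ)) (hφ : HasCompactSupport φ) (T : E) : C₀(X, E) where
  toFun := fun x => (φ x : ℂ) • T
  continuous_toFun := (Complex.continuous_ofReal.comp φ.continuous).smul continuous_const
  zero_at_infty' := by
    have hmem : (tsupport φ)ᶜ ∈ cocompact X :=
      mem_cocompact.mpr ⟨tsupport φ, hφ, subset_rfl⟩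
    refine Tendsto.congr' ?_ tendsto_const_nhds
    filter_upwards [hmem] with x hx
    rw [image_eq_zero_of_notMem_tsupport hx]
    simp

lemma cpt_apply (φ : C(X, ℝ)) (hφ : HasCompactSupport φ) (T : E) (x : X) :
    cpt φ hφ T x = (φ x : ℂ) • T := rfl

lemma eval_continuous (x : X) : Continuous fun f : C₀(X, E) => f x := by
  have : LipschitzWith 1 fun f : C₀(X, E) => f x := by
    refine LipschitzWith.of_dist_le_mul fun f g => ?_
    rw [NNReal.coe_one, one_mul, ← ZeroAtInftyContinuousMap.dist_toBCF_eq_dist]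
    exact BoundedContinuousFunction.dist_coe_le_dist (f := f.toBCF) (g := g.toBCF) x
  exact this.continuous

lemma norm_apply_le (f : C₀(X, E)) (x : X) : ‖f x‖ ≤ ‖f‖ := by
  rw [← ZeroAtInftyContinuousMap.norm_toBCF_eq_norm]
  exact BoundedContinuousFunction.norm_coe_le_norm f.toBCF x

lemma norm_le_of_forall {f : C₀(X, E)} {C : ℝ} (hC : 0 ≤ C) (h : ∀ x, ‖f x‖ ≤ C) : ‖f‖ ≤ C := by
  rw [← ZeroAtInftyContinuousMap.norm_toBCF_eq_norm]
  exact (BoundedContinuousFunction.norm_le hC).mpr h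

/-- evaluation as an `AddMonoidHom` -/
def evalAM (x : X) : C₀(X, E) →+ E where
  toFun f := f x
  map_zero' := rfl
  map_add' _ _ := rfl

lemma sum_apply' {ι : Type*} (s : Finset ι) (f : ι → C₀(X, E)) (x : X) :
    (∑ i ∈ s, f i) x = ∑ i ∈ s, f i x :=
  map_sum (evalAM (E := E) x) f s

lemma cpt_zero (φ : C(X, ℝ)) (hφ : HasCompactSupport φ) : cpt φ hφ (0 : E) = 0 := by
  ext x
  simp [cpt_apply]

lemma isCompact_le_norm (f : C₀(X, E)) {ε : ℝ} (hε : 0 < ε) : IsCompact {x | ε ≤ ‖f x‖} := by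
  have h0 : Tendsto f (cocompact X) (nhds 0) := zero_at_infty f
  have : f ⁻¹' Metric.ball 0 ε ∈ cocompact X := h0 (Metric.ball_mem_nhds 0 hε)
  obtain ⟨t, htc, hts⟩ := mem_cocompact.mp this
  refine IsCompact.of_isClosed_subset htc ?_ ?_
  · have : Continuous fun x => ‖f x‖ := f.continuous.norm
    exact isClosed_le continuous_const this
  · intro x hx
    by_contra hxt
    have := hts hxt
    simp only [Set.mem_preimage, Metric.mem_ball, dist_zero_right] at this
    exact absurd hx (by simpa using not_le.mpr this)

end C0

lemma partition_lemma {X : Type*} [TopologicalSpace X] [LocallyCompactSpace X] [T2Space X]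
    {n : ℕ} {t : Set X} {s : Fin n → Set X} (hs : ∀ i, IsOpen (s i)) (htcp : IsCompact t)
    (hst : t ⊆ ⋃ i, s i) :
    ∃ ρ : Fin n → C(X, ℝ), (∀ i, tsupport (ρ i) ⊆ s i) ∧ (∀ x ∈ t, ∑ i, ρ i x = 1) ∧
      (∀ x, ∑ i, ρ i x ≤ 1) ∧ (∀ i x, 0 ≤ ρ i x) ∧ (∀ i, HasCompactSupport (ρ i)) := by
  obtain ⟨f, hfsub, hfcp⟩ := PartitionOfUnity.exists_isSubordinate_of_locallyFinite_t2space htcp s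
    hs (locallyFinite_of_finite _) hst
  refine ⟨fun i => f i, fun i => hfsub i, ?_, ?_, fun i x => f.nonneg' i x, hfcp⟩
  · intro x hx
    have := f.sum_eq_one' x hx
    rwa [finsum_eq_sum_of_fintype] at this
  · intro x
    have := f.sum_le_one' x
    rwa [finsum_eq_sum_of_fintype] at this

section Main

variable {X : Type*} [TopologicalSpace X] [LocallyCompactSpace X] [T2Space X]
variable {H : Type*} [NormedAddCommGroup H] [InnerProductSpace ℂ H] [CompleteSpace H]

attribute [local instance] compactsAlgNormedSpace
attribute [local instance] compactsAlgNormSMulClass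

/-- the hull of a set of functions -/
def hull (S : Set C₀(X, ↥(compactsAlg H))) : Set X := {x | ∀ f ∈ S, f x = 0}

lemma hull_isClosed (S : Set C₀(X, ↥(compactsAlg H))) : IsClosed (hull S) := by
  have : hull S = ⋂ f ∈ S, (fun x => f x) ⁻¹' {0} := by
    ext x; simp [hull]
  rw [this]
  exact isClosed_biInter fun f _ => IsClosed.preimage f.continuous isClosed_singleton

variable {S : Set C₀(X, ↥(compactsAlg H))} (hS : IsClosedTwoSidedIdeal S)

section withS
include hS

lemma S_zero_mem : (0 : C₀(X, ↥(compactsAlg H))) ∈ S := by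
  obtain ⟨-, ⟨J, hJ⟩, -⟩ := hS
  rw [← hJ]; exact J.zero_mem

lemma S_add_mem {f g : C₀(X, ↥(compactsAlg H))} (hf : f ∈ S) (hg : g ∈ S) : f + g ∈ S := by
  obtain ⟨-, ⟨J, hJ⟩, -⟩ := hS
  have hf' : f ∈ J := by rw [← SetLike.mem_coe, hJ]; exact hf
  have hg' : g ∈ J := by rw [← SetLike.mem_coe, hJ]; exact hg
  rw [← hJ]
  exact J.add_mem hf' hg' 

lemma S_sum_mem {ι : Type*} (s : Finset ι) {f : ι → C₀(X, ↥(compactsAlg H))} (hf : ∀ i ∈ s, f i ∈ S) :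
    (∑ i ∈ s, f i) ∈ S := by
  obtain ⟨-, ⟨J, hJ⟩, -⟩ := hS
  have hf' : ∀ i ∈ s, f i ∈ J := fun i hi => by rw [← SetLike.mem_coe, hJ]; exact hf i hi
  rw [← hJ]
  exact Submodule.sum_mem J hf' 

/-- Key fiber lemma: if some element of `S` is nonzero at `x`, then `S` contains an
element whose value at `x` is any prescribed rank-one operator. -/
lemma fiber_rank_one (x : X) (g : C₀(X, ↥(compactsAlg H))) (hg : g ∈ S) (hgx : g x ≠ 0) (v w : H) :
    ∃ h ∈ S, h x = rkK v w := by
  set G : H →L[ℂ] H := ((g x : ↥(compactsAlg H)) : H →L[ℂ] H) with hG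
  have hGne : G ≠ 0 := by
    intro h
    exact hgx (Subtype.ext h)
  obtain ⟨u, hu⟩ : ∃ u, G u ≠ 0 := by
    by_contra h
    push_neg at h
    exact hGne (ContinuousLinearMap.ext fun z => by rw [h z]; rfl)
  obtain ⟨φ, hφ1, -, hφc, hφ01⟩ :=
    exists_continuous_one_zero_of_isCompact (isCompact_singleton (x := x)) isClosed_empty
      (Set.disjoint_empty _)
  have hGuinner : ⟪G u, G u⟫_ℂ ≠ 0 := inner_self_ne_zero.mpr hu
  set c : ℂ := (⟪G u, G u⟫_ℂ)⁻¹ with hc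
  set Aop : ↥(compactsAlg H) := rkK v ((starRingEnd ℂ c) • (G u)) with hA
  set Bop : ↥(compactsAlg H) := rkK u w with hB
  refine ⟨cpt φ hφc Aop * (g * cpt φ hφc Bop), ?_, ?_⟩
  · exact (hS.2.2 _ _ ((hS.2.2 _ _ hg).2)).1
  · have hφx : φ x = 1 := hφ1 (Set.mem_singleton x)
    apply Subtype.ext
    have happ : ∀ f₁ f₂ : C₀(X, ↥(compactsAlg H)), (f₁ * f₂) x = f₁ x * f₂ x := fun _ _ => rfl
    rw [happ, happ]
    have : ((cpt φ hφc Aop x * (g x * cpt φ hφc Bop x) : ↥(compactsAlg H)) : H →L[ℂ] H)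
        = (rk v ((starRingEnd ℂ c) • (G u))).comp (G.comp (rk u w)) := by
      rw [cpt_apply, cpt_apply, hφx]
      simp only [Complex.ofReal_one, one_smul]
      rfl
    rw [this, rkK_coe]
    ext z
    simp only [ContinuousLinearMap.comp_apply, rk_apply, map_smul, inner_smul_right,
      inner_smul_left, Complex.conj_conj]
    rw [hc, inv_mul_cancel₀ hGuinner, one_smul]

lemma cpt_rank_one_mem (φ : C(X, ℝ)) (hφc : HasCompactSupport φ)
    (hφ01 : ∀ y, φ y ∈ Icc (0:ℝ) 1)
    (hsupp : ∀ x ∈ tsupport φ, ∃ g ∈ S, g x ≠ 0) (v w : H) :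
    cpt φ hφc (rkK v w) ∈ S := by
  rcases eq_or_ne v 0 with rfl | hv
  · have : rkK (H := H) 0 w = 0 := by
      apply Subtype.ext
      ext z
      simp [rkK_coe, rk_apply]
    rw [this, cpt_zero]
    exact S_zero_mem hS
  have hvinner : ⟪v, v⟫_ℂ ≠ 0 := inner_self_ne_zero.mpr hv
  set cp : ℂ := (⟪v, v⟫_ℂ)⁻¹ with hcp
  set R : ↥(compactsAlg H) := rkK v w with hR
  set p : ↥(compactsAlg H) := rkK (cp • v) v with hp
  have hpR : p * R = R := by
    apply Subtype.ext
    ext z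
    show rk (cp • v) v (rk v w z) = rk v w z
    simp only [rk_apply, inner_smul_right, smul_smul]
    rw [mul_assoc, hcp, mul_inv_cancel₀ hvinner, mul_one]
  -- closure argument
  rw [← hS.1.closure_eq]
  rw [Metric.mem_closure_iff]
  intro ε hε
  have hMpos : (0:ℝ) < 1 + ‖p‖ := by positivity
  set δ : ℝ := ε / (1 + ‖p‖) with hδdef
  have hδ : 0 < δ := div_pos hε hMpos
  -- choose elements of S hitting R on the support
  have hch : ∀ x : tsupport φ, ∃ h, h ∈ S ∧ h (x : X) = R := by
    intro x
    obtain ⟨g, hgS, hgx⟩ := hsupp x x.2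
    obtain ⟨h, hhS, hhx⟩ := fiber_rank_one hS x g hgS hgx v w
    exact ⟨h, hhS, hhx⟩
  choose h hhS hhx using hch
  set V : tsupport φ → Set X := fun x => {y | ‖h x y - R‖ < δ} with hV
  have hVopen : ∀ x, IsOpen (V x) := by
    intro x
    have : Continuous fun y => ‖h x y - R‖ := ((h x).continuous.sub continuous_const).norm
    exact isOpen_lt this continuous_const
  have hVmem : ∀ x : tsupport φ, (x : X) ∈ V x := by
    intro x
    simp only [hV, Set.mem_setOf_eq, hhx x, sub_self, norm_zero]
    exact hδ
  have hcover : tsupport φ ⊆ ⋃ x : tsupport φ, V x := fun y hy =>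
    Set.mem_iUnion.mpr ⟨⟨y, hy⟩, hVmem ⟨y, hy⟩⟩
  obtain ⟨t, ht⟩ := hφc.elim_finite_subcover V hVopen hcover
  set n := t.card with hn
  set e : Fin n ≃ {x // x ∈ t} := t.equivFin.symm with he
  set s : Fin n → Set X := fun i => V (e i) with hs
  have hscover : tsupport φ ⊆ ⋃ i, s i := by
    intro y hy
    obtain ⟨x, hxt, hyx⟩ := Set.mem_iUnion₂.mp (ht hy)
    exact Set.mem_iUnion.mpr ⟨e.symm ⟨x, hxt⟩, by simpa [hs, Equiv.apply_symm_apply] using hyx⟩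
  obtain ⟨ρ, hρs, hρ1, hρle, hρ0, hρc⟩ :=
    partition_lemma (fun i => hVopen (e i)) hφc hscover
  -- the approximating element
  have hcc : ∀ i : Fin n, HasCompactSupport ⇑(ρ i * φ) := by
    intro i
    have := (hρc i).mul_right (f' := ⇑φ)
    rwa [show ⇑(ρ i * φ) = ⇑(ρ i) * ⇑φ from rfl]
  set F : Fin n → C₀(X, ↥(compactsAlg H)) := fun i => cpt (ρ i * φ) (hcc i) p with hF
  set gS : C₀(X, ↥(compactsAlg H)) := ∑ i, F i * h (e i) with hgS2
  have hgSmem : gS ∈ S := by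
    refine S_sum_mem hS _ fun i _ => ?_
    exact (hS.2.2 (F i) (h (e i)) (hhS (e i))).1
  refine ⟨gS, hgSmem, ?_⟩
  rw [dist_eq_norm]
  have hbound : ∀ y : X, ‖cpt φ hφc R y - gS y‖ ≤ ‖p‖ * δ := by
    intro y
    have hgSy : gS y = ∑ i, (((ρ i) y * φ y : ℝ) : ℂ) • (p * h (e i) y) := by
      rw [hgS2, sum_apply']
      refine Finset.sum_congr rfl fun i _ => ?_
      show F i y * h (e i) y = _
      rw [hF]
      show cpt (ρ i * φ) (hcc i) p y * h (e i) y = _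
      rw [cpt_apply]
      rw [smul_mul_assoc]
      rfl
    have hcpy : cpt φ hφc R y = ∑ i, (((ρ i) y * φ y : ℝ) : ℂ) • R := by
      rw [cpt_apply]
      have : ∑ i, (((ρ i) y * φ y : ℝ) : ℂ) • R = (((∑ i, ρ i y) * φ y : ℝ) : ℂ) • R := by
        rw [← Finset.sum_smul]
        congr 1
        push_cast
        rw [Finset.sum_mul]
      rw [this]
      by_cases hy : y ∈ tsupport φ
      · rw [hρ1 y hy, one_mul]
      · have : φ y = 0 := image_eq_zero_of_notMem_tsupport hy
        rw [this]
        simp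
    rw [hcpy, hgSy, ← Finset.sum_sub_distrib]
    have : ∀ i : Fin n, (((ρ i) y * φ y : ℝ) : ℂ) • R - (((ρ i) y * φ y : ℝ) : ℂ) • (p * h (e i) y)
        = (((ρ i) y * φ y : ℝ) : ℂ) • (p * (R - h (e i) y)) := by
      intro i
      rw [← smul_sub]
      congr 1
      rw [mul_sub, hpR]
    simp_rw [this]
    refine (norm_sum_le _ _).trans ?_
    have hterm : ∀ i : Fin n, ‖(((ρ i) y * φ y : ℝ) : ℂ) • (p * (R - h (e i) y))‖
        ≤ ((ρ i) y * φ y) * (‖p‖ * δ) := by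
      intro i
      rw [norm_smul, Complex.norm_real, Real.norm_eq_abs,
        abs_of_nonneg (mul_nonneg (hρ0 i y) (hφ01 y).1)]
      rcases eq_or_ne ((ρ i) y) 0 with hzero | hne
      · rw [hzero]
        simp
      · have hyV : y ∈ V (e i) := hρs i (subset_tsupport _ (by exact hne))
        have : ‖p * (R - h (e i) y)‖ ≤ ‖p‖ * δ := by
          refine (norm_mul_le _ _).trans ?_
          refine mul_le_mul_of_nonneg_left ?_ (norm_nonneg p)
          rw [norm_sub_rev]
          exact le_of_lt hyV
        exact mul_le_mul_of_nonneg_left this (mul_nonneg (hρ0 i y) (hφ01 y).1)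
    refine (Finset.sum_le_sum fun i _ => hterm i).trans ?_
    rw [← Finset.sum_mul]
    have hsum1 : (∑ i, (ρ i) y * φ y) ≤ 1 := by
      rw [← Finset.sum_mul]
      calc (∑ i, (ρ i) y) * φ y ≤ 1 * 1 := by
            apply mul_le_mul (hρle y) (hφ01 y).2 (hφ01 y).1
            linarith [hρle y, Finset.sum_nonneg fun i (_ : i ∈ Finset.univ) => hρ0 i y]
      _ = 1 := one_mul 1
    calc (∑ i, (ρ i) y * φ y) * (‖p‖ * δ) ≤ 1 * (‖p‖ * δ) := by
          apply mul_le_mul_of_nonneg_right hsum1 (by positivity)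
    _ = ‖p‖ * δ := one_mul _
  have : ‖cpt φ hφc R - gS‖ ≤ ‖p‖ * δ := by
    refine norm_le_of_forall (by positivity) fun y => ?_
    have : (cpt φ hφc R - gS) y = cpt φ hφc R y - gS y := rfl
    rw [this]
    exact hbound y
  calc ‖cpt φ hφc R - gS‖ ≤ ‖p‖ * δ := this
  _ < (1 + ‖p‖) * δ := by nlinarith
  _ = ε := by
      rw [hδdef]
      field_simp

lemma cpt_mem (φ : C(X, ℝ)) (hφc : HasCompactSupport φ)
    (hφ01 : ∀ y, φ y ∈ Icc (0:ℝ) 1)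
    (hsupp : ∀ x ∈ tsupport φ, ∃ g ∈ S, g x ≠ 0) (T : ↥(compactsAlg H)) :
    cpt φ hφc T ∈ S := by
  rw [← hS.1.closure_eq, Metric.mem_closure_iff]
  intro ε hε
  have hε2 : 0 < ε / 2 := by positivity
  obtain ⟨n, v, w, hvw⟩ := exists_finrank_approx (T : H →L[ℂ] H) T.2 hε2
  set Fk : ↥(compactsAlg H) := ∑ i, rkK (v i) (w i) with hFk
  have hFkcoe : ((Fk : ↥(compactsAlg H)) : H →L[ℂ] H) = ∑ i, rk (v i) (w i) := by
    rw [hFk]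
    exact AddSubmonoidClass.coe_finset_sum _ _
  have hTFk : ‖T - Fk‖ ≤ ε / 2 := by
    have : ((T - Fk : ↥(compactsAlg H)) : H →L[ℂ] H) = (T : H →L[ℂ] H) - ∑ i, rk (v i) (w i) := by
      rw [AddSubgroupClass.coe_sub, hFkcoe]
    show ‖((T - Fk : ↥(compactsAlg H)) : H →L[ℂ] H)‖ ≤ ε / 2
    rw [this]
    exact hvw
  have hsplit : cpt φ hφc Fk = ∑ i, cpt φ hφc (rkK (v i) (w i)) := by
    ext y
    rw [sum_apply', cpt_apply]
    rw [hFk, Finset.smul_sum]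
    rfl
  have hmem : cpt φ hφc Fk ∈ S := by
    rw [hsplit]
    exact S_sum_mem hS _ fun i _ => cpt_rank_one_mem hS φ hφc hφ01 hsupp (v i) (w i)
  refine ⟨cpt φ hφc Fk, hmem, ?_⟩
  rw [dist_eq_norm]
  have : ‖cpt φ hφc T - cpt φ hφc Fk‖ ≤ ε / 2 := by
    refine norm_le_of_forall hε2.le fun y => ?_
    have heq : (cpt φ hφc T - cpt φ hφc Fk) y = ((φ y : ℝ) : ℂ) • (T - Fk) := by
      show cpt φ hφc T y - cpt φ hφc Fk y = _
      rw [cpt_apply, cpt_apply, ← smul_sub]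
    rw [heq, norm_smul, Complex.norm_real, Real.norm_eq_abs, abs_of_nonneg (hφ01 y).1]
    calc φ y * ‖T - Fk‖ ≤ 1 * (ε / 2) :=
          mul_le_mul (hφ01 y).2 hTFk (norm_nonneg _) zero_le_one
    _ = ε / 2 := one_mul _
  linarith [this]

lemma mem_S_of_vanish (f : C₀(X, ↥(compactsAlg H))) (hf : ∀ x ∈ hull S, f x = 0) : f ∈ S := by
  rw [← hS.1.closure_eq, Metric.mem_closure_iff]
  intro ε hε
  have hε3 : 0 < ε / 3 := by positivity
  set K : Set X := {x | ε / 3 ≤ ‖f x‖} with hK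
  have hKc : IsCompact K := isCompact_le_norm f hε3
  have hKhull : ∀ x ∈ K, x ∉ hull S := by
    intro x hx hxh
    have hx' : ε / 3 ≤ ‖f x‖ := hx
    rw [hf x hxh, norm_zero] at hx'
    linarith
  set W : K → Set X := fun x => {y | ‖f y - f x‖ < ε / 3} ∩ (hull S)ᶜ with hW
  have hWopen : ∀ x, IsOpen (W x) := fun x =>
    (isOpen_lt ((f.continuous.sub continuous_const).norm) continuous_const).inter
      (hull_isClosed S).isOpen_compl
  have hWmem : ∀ x : K, (x : X) ∈ W x := by
    intro x
    constructor
    · show ‖f x - f x‖ < ε / 3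
      rw [sub_self, norm_zero]
      exact hε3
    · exact hKhull x x.2
  obtain ⟨t, ht⟩ := hKc.elim_finite_subcover W hWopen
    (fun y hy => Set.mem_iUnion.mpr ⟨⟨y, hy⟩, hWmem ⟨y, hy⟩⟩)
  set n := t.card with hn
  set e : Fin n ≃ {x // x ∈ t} := t.equivFin.symm with he
  set xi : Fin n → X := fun i => (((e i : ↑K)) : X) with hxi
  have hscover : K ⊆ ⋃ i, W (e i) := by
    intro y hy
    obtain ⟨x, hxt, hyx⟩ := Set.mem_iUnion₂.mp (ht hy)
    exact Set.mem_iUnion.mpr ⟨e.symm ⟨x, hxt⟩, by simpa [Equiv.apply_symm_apply] using hyx⟩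
  obtain ⟨ρ, hρs, hρ1, hρle, hρ0, hρc⟩ := partition_lemma (fun i => hWopen (e i)) hKc hscover
  have hρ01 : ∀ i y, (ρ i) y ∈ Icc (0:ℝ) 1 := by
    intro i y
    refine ⟨hρ0 i y, ?_⟩
    calc (ρ i) y ≤ ∑ j, (ρ j) y :=
          Finset.single_le_sum (fun j _ => hρ0 j y) (Finset.mem_univ i)
    _ ≤ 1 := hρle y
  set g : C₀(X, ↥(compactsAlg H)) := ∑ i, cpt (ρ i) (hρc i) (f (xi i)) with hg
  have hgmem : g ∈ S := by
    refine S_sum_mem hS _ fun i _ => ?_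
    refine cpt_mem hS (ρ i) (hρc i) (hρ01 i) ?_ (f (xi i))
    intro y hy
    have : y ∈ (hull S)ᶜ := (hρs i hy).2
    have hy2 : ¬ ∀ g ∈ S, g y = 0 := this
    push_neg at hy2
    exact hy2
  refine ⟨g, hgmem, ?_⟩
  have hbound : ∀ y : X, ‖f y - g y‖ ≤ ε / 3 + ε / 3 := by
    intro y
    have hgy : g y = ∑ i, (((ρ i) y : ℝ) : ℂ) • f (xi i) := by
      rw [hg, sum_apply']
      exact Finset.sum_congr rfl fun i _ => rfl
    have expand : f y - g y = (∑ i, (((ρ i) y : ℝ) : ℂ) • (f y - f (xi i)))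
        + ((1 : ℂ) - (((∑ i, (ρ i) y : ℝ)) : ℂ)) • f y := by
      rw [hgy]
      simp only [smul_sub, Finset.sum_sub_distrib, sub_smul, one_smul, Complex.ofReal_sum,
        Finset.sum_smul]
      abel
    rw [expand]
    have h1 : ‖∑ i, (((ρ i) y : ℝ) : ℂ) • (f y - f (xi i))‖ ≤ ε / 3 := by
      refine (norm_sum_le _ _).trans ?_
      have hterm : ∀ i : Fin n, ‖(((ρ i) y : ℝ) : ℂ) • (f y - f (xi i))‖ ≤ (ρ i) y * (ε / 3) := by
        intro i
        rw [norm_smul, Complex.norm_real, Real.norm_eq_abs, abs_of_nonneg (hρ0 i y)]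
        rcases eq_or_ne ((ρ i) y) 0 with hzero | hne
        · rw [hzero]
          simp
        · have hyW : y ∈ W (e i) := hρs i (subset_tsupport _ (by exact hne))
          have : ‖f y - f (xi i)‖ < ε / 3 := hyW.1
          exact mul_le_mul_of_nonneg_left this.le (hρ0 i y)
      refine (Finset.sum_le_sum fun i _ => hterm i).trans ?_
      rw [← Finset.sum_mul]
      calc (∑ i, (ρ i) y) * (ε / 3) ≤ 1 * (ε / 3) :=
            mul_le_mul_of_nonneg_right (hρle y) hε3.le
      _ = ε / 3 := one_mul _
    have h2 : ‖((1 : ℂ) - (((∑ i, (ρ i) y : ℝ)) : ℂ)) • f y‖ ≤ ε / 3 := by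
      by_cases hy : y ∈ K
      · rw [hρ1 y hy]
        simpa using hε3.le
      · have hfy : ‖f y‖ < ε / 3 := by
          have : ¬ (ε / 3 ≤ ‖f y‖) := hy
          linarith [not_le.mp this]
        have hcoef : ‖(1 : ℂ) - (((∑ i, (ρ i) y : ℝ)) : ℂ)‖ ≤ 1 := by
          rw [show (1 : ℂ) - (((∑ i, (ρ i) y : ℝ)) : ℂ) = (((1 - ∑ i, (ρ i) y : ℝ)) : ℂ) by
            push_cast; ring]
          rw [Complex.norm_real, Real.norm_eq_abs]
          rw [abs_of_nonneg (by linarith [hρle y])]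
          have : (0:ℝ) ≤ ∑ i, (ρ i) y :=
            Finset.sum_nonneg fun i _ => hρ0 i y
          linarith
        rw [norm_smul]
        calc ‖(1 : ℂ) - (((∑ i, (ρ i) y : ℝ)) : ℂ)‖ * ‖f y‖ ≤ 1 * (ε / 3) :=
              mul_le_mul hcoef hfy.le (norm_nonneg _) zero_le_one
        _ = ε / 3 := one_mul _
    calc ‖(∑ i, (((ρ i) y : ℝ) : ℂ) • (f y - f (xi i)))
        + ((1 : ℂ) - (((∑ i, (ρ i) y : ℝ)) : ℂ)) • f y‖
        ≤ ‖∑ i, (((ρ i) y : ℝ) : ℂ) • (f y - f (xi i))‖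
          + ‖((1 : ℂ) - (((∑ i, (ρ i) y : ℝ)) : ℂ)) • f y‖ := norm_add_le _ _
    _ ≤ ε / 3 + ε / 3 := add_le_add h1 h2
  have hfg : ‖f - g‖ ≤ ε / 3 + ε / 3 := by
    refine norm_le_of_forall (by positivity) fun y => ?_
    exact hbound y
  calc dist f g = ‖f - g‖ := dist_eq_norm f g
  _ ≤ ε / 3 + ε / 3 := hfg
  _ < ε := by linarith

end withS

/-- the vanishing submodule -/
noncomputable def JCsub (C : Set X) : Submodule ℂ (C₀(X, ↥(compactsAlg H))) where
  carrier := {f | ∀ x ∈ C, f x = 0}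
  add_mem' := fun {f g} hf hg x hx => by
    show f x + g x = 0
    rw [hf x hx, hg x hx, add_zero]
  zero_mem' := fun x _ => rfl
  smul_mem' := fun c f hf x hx => by
    show c • f x = 0
    rw [hf x hx, smul_zero]

lemma JC_ideal (C : Set X) :
    IsClosedTwoSidedIdeal {f : C₀(X, ↥(compactsAlg H)) | ∀ x ∈ C, f x = 0} := by
  refine ⟨?_, ⟨?_, ?_⟩⟩
  · have : {f : C₀(X, ↥(compactsAlg H)) | ∀ x ∈ C, f x = 0}
        = ⋂ x ∈ C, (fun f : C₀(X, ↥(compactsAlg H)) => f x) ⁻¹' {0} := by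
      ext f
      simp
    rw [this]
    exact isClosed_biInter fun x _ => IsClosed.preimage (eval_continuous x) isClosed_singleton
  · exact ⟨JCsub C, rfl⟩
  · intro a b hb
    constructor
    · intro x hx
      show a x * b x = 0
      rw [hb x hx, mul_zero]
    · intro x hx
      show b x * a x = 0
      rw [hb x hx, zero_mul]

lemma hull_JC (hinf : ¬ FiniteDimensional ℂ H) (C : Set X) (hC : IsClosed C) :
    hull {f : C₀(X, ↥(compactsAlg H)) | ∀ x ∈ C, f x = 0} = C := by
  obtain ⟨v, hv⟩ : ∃ v : H, v ≠ 0 := by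
    by_contra hcon
    push_neg at hcon
    haveI : Subsingleton H := ⟨fun a b => by rw [hcon a, hcon b]⟩
    exact hinf inferInstance
  apply Set.Subset.antisymm
  · intro x hx
    by_contra hxC
    obtain ⟨φ, hφ1, hφ0, hφc, hφ01⟩ := exists_continuous_one_zero_of_isCompact
      (isCompact_singleton (x := x)) hC (Set.disjoint_singleton_left.mpr hxC)
    have hmem : cpt φ hφc (rkK v v) ∈ {f : C₀(X, ↥(compactsAlg H)) | ∀ y ∈ C, f y = 0} := by
      intro y hy
      show ((φ y : ℝ) : ℂ) • rkK v v = 0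
      rw [hφ0 hy]
      simp
    have hx0 := hx _ hmem
    rw [cpt_apply, hφ1 (Set.mem_singleton x)] at hx0
    simp only [Pi.one_apply, Complex.ofReal_one, one_smul] at hx0
    exact rkK_ne_zero hv hx0
  · intro x hxC f hf
    exact hf x hxC

end Main

end ClosedIdealsAux

theorem closed_ideals_of_C0_compacts_biject_with_closed_sets
    (X : Type*) [TopologicalSpace X] [LocallyCompactSpace X] [T2Space X]
    (H : Type*) [NormedAddCommGroup H] [InnerProductSpace ℂ H] [CompleteSpace H]
    [TopologicalSpace.SeparableSpace H] (hinf : ¬ FiniteDimensional ℂ H) :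
    ∃ Φ : {C : Set X // IsClosed C} →
        {S : Set C₀(X, ↥(compactsAlg H)) // IsClosedTwoSidedIdeal S},
      (∀ C : {C : Set X // IsClosed C},
        (Φ C : Set C₀(X, ↥(compactsAlg H))) =
          {f : C₀(X, ↥(compactsAlg H)) | ∀ x ∈ (C : Set X), f x = 0}) ∧
      Function.Bijective Φ := by
  classical
  refine ⟨fun C => ⟨{f : C₀(X, ↥(compactsAlg H)) | ∀ x ∈ (C : Set X), f x = 0},
    ClosedIdealsAux.JC_ideal C.1⟩, fun C => rfl, ?_, ?_⟩
  · intro C D h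
    have hsets := congrArg Subtype.val h
    apply Subtype.ext
    have hC := ClosedIdealsAux.hull_JC hinf C.1 C.2
    have hD := ClosedIdealsAux.hull_JC hinf D.1 D.2
    rw [← hC, ← hD]
    exact congrArg ClosedIdealsAux.hull hsets
  · rintro ⟨S, hS⟩
    refine ⟨⟨ClosedIdealsAux.hull S, ClosedIdealsAux.hull_isClosed S⟩, ?_⟩
    apply Subtype.ext
    show {f : C₀(X, ↥(compactsAlg H)) | ∀ x ∈ ClosedIdealsAux.hull S, f x = 0} = S
    apply Set.Subset.antisymm
    · intro f hf
      exact ClosedIdealsAux.mem_S_of_vanish hS f hf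
    · intro f hfS x hx
      exact hx f hfS
end

section
/- Let n ≥ 1 and let λ be a Schwartz function on ℝ⁴. Then the function G_λ : (ℝ⁴)^n → ℂ defined by G_λ(a₁,…,a_n) = λ(κ(a)) · exp( −(1/2) Σ_{j=1}^n |a_j − κ(a)|_E² ), where κ(a) = (1/n) Σ_{j=1}^n a_j ∈ ℝ⁴, is a Schwartz function on ℝ^{4n}. -/
/-!
Write `y_j = a_j - κ(a)`. The kernel is `(λ ⊗ γ)(κ(a), y)`, where `γ(y) = exp(-|y|²/2)` is the
Gaussian on `(ℝ⁴)ⁿ`: a tensor power of the one-dimensional Gaussian, whose derivatives are Hermite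
polynomials times the Gaussian. Tensor products of Schwartz functions are Schwartz by the Leibniz
rule. The linear map `a ↦ (κ(a), y)` is antilipschitz because `a_j = y_j + κ(a)`, so composing
with it preserves the Schwartz class.
-/

open Finset
open scoped Nat NNReal ContDiff

lemma abs_pow_mul_exp_neg_sq_div_two_le (j : ℕ) (x : ℝ) :
    |x| ^ j * Real.exp (-(x ^ 2 / 2)) ≤ 1 + 2 ^ j * j ! := by
  have hpow : |x| ^ j ≤ 1 + (x ^ 2) ^ j := by
    rcases le_total |x| 1 with h | h
    · linarith [pow_le_one₀ (n := j) (abs_nonneg x) h, pow_nonneg (sq_nonneg x) j]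
    · calc |x| ^ j ≤ (|x| ^ 2) ^ j := pow_le_pow_left₀ (abs_nonneg x) (by nlinarith) j
        _ = (x ^ 2) ^ j := by rw [sq_abs]
        _ ≤ 1 + (x ^ 2) ^ j := le_add_of_nonneg_left zero_le_one
  have hexp : (x ^ 2) ^ j ≤ 2 ^ j * j ! * Real.exp (x ^ 2 / 2) := by
    have h := Real.pow_div_factorial_le_exp (x := x ^ 2 / 2) (by positivity) j
    rw [div_le_iff₀ (by positivity)] at h
    calc (x ^ 2) ^ j = 2 ^ j * (x ^ 2 / 2) ^ j := by rw [div_pow]; field_simp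
      _ ≤ 2 ^ j * (Real.exp (x ^ 2 / 2) * j !) := by gcongr
      _ = 2 ^ j * j ! * Real.exp (x ^ 2 / 2) := by ring
  calc |x| ^ j * Real.exp (-(x ^ 2 / 2))
      ≤ Real.exp (-(x ^ 2 / 2)) + (x ^ 2) ^ j * Real.exp (-(x ^ 2 / 2)) := by
        nlinarith [Real.exp_pos (-(x ^ 2 / 2))]
    _ ≤ 1 + 2 ^ j * j ! := by
        refine add_le_add (Real.exp_le_one_iff.2 (by nlinarith [sq_nonneg x])) ?_
        rwa [Real.exp_neg, ← div_eq_mul_inv, div_le_iff₀ (Real.exp_pos _)]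

lemma Polynomial.exists_bound_abs_pow_mul_abs_eval_mul_exp (p : Polynomial ℝ) (k : ℕ) :
    ∃ C, ∀ x : ℝ, |x| ^ k * (|p.eval x| * Real.exp (-(x ^ 2 / 2))) ≤ C := by
  refine ⟨∑ i ∈ range (p.natDegree + 1), |p.coeff i| * (1 + 2 ^ (k + i) * (k + i)!),
    fun x => ?_⟩
  have heval : |p.eval x| ≤ ∑ i ∈ range (p.natDegree + 1), |p.coeff i| * |x| ^ i := by
    rw [p.eval_eq_sum_range]
    refine (abs_sum_le_sum_abs _ _).trans_eq ?_
    simp only [abs_mul, abs_pow]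
  calc |x| ^ k * (|p.eval x| * Real.exp (-(x ^ 2 / 2)))
      ≤ |x| ^ k * ((∑ i ∈ range (p.natDegree + 1), |p.coeff i| * |x| ^ i)
          * Real.exp (-(x ^ 2 / 2))) := by gcongr
    _ = ∑ i ∈ range (p.natDegree + 1),
          |p.coeff i| * (|x| ^ (k + i) * Real.exp (-(x ^ 2 / 2))) := by
        simp only [mul_sum, sum_mul, pow_add]
        exact sum_congr rfl fun i _ => by ring
    _ ≤ _ := by
        gcongr with i
        exact abs_pow_mul_exp_neg_sq_div_two_le (k + i) x

lemma norm_iteratedFDeriv_comp_right_le_of_norm_le_one {D E F : Type*}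
    [NormedAddCommGroup D] [NormedSpace ℝ D] [NormedAddCommGroup E] [NormedSpace ℝ E]
    [NormedAddCommGroup F] [NormedSpace ℝ F] {f : E → F} (hf : ContDiff ℝ ∞ f)
    (L : D →L[ℝ] E) (hL : ‖L‖ ≤ 1) (x : D) (i : ℕ) :
    ‖iteratedFDeriv ℝ i (f ∘ L) x‖ ≤ ‖iteratedFDeriv ℝ i f (L x)‖ := by
  rw [L.iteratedFDeriv_comp_right hf x (by exact_mod_cast le_top)]
  calc _ ≤ ‖iteratedFDeriv ℝ i f (L x)‖ * ∏ _ : Fin i, ‖L‖ :=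
        ContinuousMultilinearMap.norm_compContinuousLinearMap_le _ _
    _ ≤ ‖iteratedFDeriv ℝ i f (L x)‖ * 1 := by
        gcongr
        exact prod_le_one (fun _ _ => norm_nonneg _) fun _ _ => hL
    _ = ‖iteratedFDeriv ℝ i f (L x)‖ := mul_one _

lemma ContinuousLinearMap.antilipschitzWith_prod_pi_proj_sub {𝕜 ι E : Type*} [NormedField 𝕜]
    [Fintype ι] [SeminormedAddCommGroup E] [NormedSpace 𝕜 E] (κ : (ι → E) →L[𝕜] E) :
    AntilipschitzWith 2
      (κ.prod (ContinuousLinearMap.pi fun j => ContinuousLinearMap.proj j - κ)) := by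
  refine ContinuousLinearMap.antilipschitz_of_bound _ fun a => ?_
  set L := κ.prod (ContinuousLinearMap.pi fun j => ContinuousLinearMap.proj j - κ)
  refine (pi_norm_le_iff_of_nonneg (by positivity)).2 fun j => ?_
  calc ‖a j‖ = ‖(L a).2 j + (L a).1‖ := by simp [L]
    _ ≤ ‖(L a).2‖ + ‖(L a).1‖ :=
        (norm_add_le _ _).trans (by gcongr; exact norm_le_pi_norm _ j)
    _ ≤ ‖L a‖ + ‖L a‖ := add_le_add (_root_.norm_snd_le _) (_root_.norm_fst_le _)
    _ = (2 : ℝ≥0) * ‖L a‖ := by push_cast; ring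

namespace SchwartzMap

noncomputable def gaussian : 𝓢(ℝ, ℂ) where
  toFun x := Real.exp (-(x ^ 2 / 2))
  smooth' :=
    Complex.ofRealCLM.contDiff.comp (f := fun x : ℝ => Real.exp (-(x ^ 2 / 2))) (by fun_prop)
  decay' k m := by
    obtain ⟨C, hC⟩ :=
      ((Polynomial.hermite m).map (Int.castRingHom ℝ)).exists_bound_abs_pow_mul_abs_eval_mul_exp k
    refine ⟨C, fun x => ?_⟩
    have hsmooth : ContDiff ℝ ∞ fun y : ℝ => Real.exp (-(y ^ 2 / 2)) := by fun_prop
    have hnorm : ‖iteratedFDeriv ℝ m (fun y : ℝ => (Real.exp (-(y ^ 2 / 2)) : ℂ)) x‖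
        = |deriv^[m] (fun y : ℝ => Real.exp (-(y ^ 2 / 2))) x| := by
      rw [← Real.norm_eq_abs, ← iteratedDeriv_eq_iterate,
        ← norm_iteratedFDeriv_eq_norm_iteratedDeriv]
      exact Complex.ofRealLI.norm_iteratedFDeriv_comp_left hsmooth.contDiffAt
        (by exact_mod_cast le_top)
    rw [Real.norm_eq_abs, hnorm, Polynomial.deriv_gaussian_eq_hermite_mul_gaussian, abs_mul,
      abs_mul, abs_pow, abs_neg, abs_one, one_pow, one_mul, Real.abs_exp, Polynomial.aeval_def,
      ← Polynomial.eval_map]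
    exact hC x

@[simp] lemma gaussian_apply (x : ℝ) : gaussian x = Real.exp (-(x ^ 2 / 2)) := rfl

section Tensor

variable {E F A : Type*} [NormedAddCommGroup E] [NormedSpace ℝ E]
  [NormedAddCommGroup F] [NormedSpace ℝ F] [NormedRing A] [NormedAlgebra ℝ A]

lemma norm_pow_mul_norm_iteratedFDeriv_fst_mul_snd_le (f : 𝓢(E, A)) (g : 𝓢(F, A))
    (k m : ℕ) (p : E × F) :
    ‖p‖ ^ k * ‖iteratedFDeriv ℝ m (fun q : E × F => f q.1 * g q.2) p‖ ≤
      ∑ i ∈ range (m + 1), (m.choose i : ℝ) *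
        (SchwartzMap.seminorm ℝ k i f * SchwartzMap.seminorm ℝ 0 (m - i) g +
          SchwartzMap.seminorm ℝ 0 i f * SchwartzMap.seminorm ℝ k (m - i) g) := by
  have hleibniz := norm_iteratedFDeriv_mul_le ((f.smooth ⊤).comp contDiff_fst)
    ((g.smooth ⊤).comp contDiff_snd) p (n := m) (by exact_mod_cast le_top)
  have hpow : ‖p‖ ^ k ≤ ‖p.1‖ ^ k + ‖p.2‖ ^ k := by
    rw [Prod.norm_def]
    rcases max_cases ‖p.1‖ ‖p.2‖ with ⟨h, -⟩ | ⟨h, -⟩ <;> rw [h]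
    · exact le_add_of_nonneg_right (by positivity)
    · exact le_add_of_nonneg_left (by positivity)
  calc _ ≤ (‖p.1‖ ^ k + ‖p.2‖ ^ k) * ∑ i ∈ range (m + 1), (m.choose i : ℝ) *
        ‖iteratedFDeriv ℝ i f p.1‖ * ‖iteratedFDeriv ℝ (m - i) g p.2‖ := by
        refine mul_le_mul hpow (hleibniz.trans ?_) (norm_nonneg _) (by positivity)
        gcongr with i
        · exact norm_iteratedFDeriv_comp_right_le_of_norm_le_one (f.smooth ⊤) _
            (ContinuousLinearMap.norm_fst_le ℝ E F) p i
        · exact norm_iteratedFDeriv_comp_right_le_of_norm_le_one (g.smooth ⊤) _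
            (ContinuousLinearMap.norm_snd_le ℝ E F) p (m - i)
    _ = ∑ i ∈ range (m + 1), (m.choose i : ℝ) *
        (‖p.1‖ ^ k * ‖iteratedFDeriv ℝ i f p.1‖ * ‖iteratedFDeriv ℝ (m - i) g p.2‖ +
          ‖iteratedFDeriv ℝ i f p.1‖ *
            (‖p.2‖ ^ k * ‖iteratedFDeriv ℝ (m - i) g p.2‖)) := by
        rw [mul_sum]
        exact sum_congr rfl fun i _ => by ring
    _ ≤ _ := by
        gcongr with i
        · exact f.le_seminorm ℝ k i p.1
        · exact g.norm_iteratedFDeriv_le_seminorm ℝ (m - i) p.2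
        · exact f.norm_iteratedFDeriv_le_seminorm ℝ i p.1
        · exact g.le_seminorm ℝ k (m - i) p.2

noncomputable def tensor (f : 𝓢(E, A)) (g : 𝓢(F, A)) : 𝓢(E × F, A) where
  toFun p := f p.1 * g p.2
  smooth' := ((f.smooth ⊤).comp contDiff_fst).mul ((g.smooth ⊤).comp contDiff_snd)
  decay' k m := ⟨_, norm_pow_mul_norm_iteratedFDeriv_fst_mul_snd_le f g k m⟩

@[simp] lemma tensor_apply (f : 𝓢(E, A)) (g : 𝓢(F, A)) (p : E × F) :
    tensor f g p = f p.1 * g p.2 := rfl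

end Tensor

section TensorPow

variable {V R : Type*} [NormedAddCommGroup V] [NormedSpace ℝ V]
  [NormedCommRing R] [NormedAlgebra ℝ R]

noncomputable def tensorPow (g : 𝓢(V, R)) : (m : ℕ) → 𝓢(Fin m → V, R)
  | 0 => (HasCompactSupport.of_compactSpace fun _ => (1 : R)).toSchwartzMap contDiff_const
  | m + 1 => compCLMOfContinuousLinearEquiv ℝ (Fin.consEquivL ℝ fun _ => V).symm
      (tensor g (tensorPow g m))

@[simp] lemma tensorPow_apply (g : 𝓢(V, R)) (m : ℕ) (y : Fin m → V) :
    tensorPow g m y = ∏ i, g (y i) := by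
  induction m with
  | zero => simp [tensorPow]
  | succ m ih => simp [tensorPow, ih, Fin.prod_univ_succ, Fin.tail]

end TensorPow

lemma tensorPow_tensorPow_gaussian_apply {m n : ℕ} (x : Fin n → Fin m → ℝ) :
    tensorPow (tensorPow gaussian m) n x = Real.exp (-(1 / 2) * ∑ j, ∑ μ, x j μ ^ 2) := by
  have hsum : -(1 / 2) * ∑ j, ∑ μ, x j μ ^ 2 = ∑ j, ∑ μ, -(x j μ ^ 2 / 2) := by
    simp only [mul_sum]
    exact sum_congr rfl fun j _ => sum_congr rfl fun μ _ => by ring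
  simp only [tensorPow_apply, gaussian_apply, ← Complex.ofReal_prod, hsum, Real.exp_sum]

end SchwartzMap

open SchwartzMap in
theorem gaussian_cutoff_kernel_is_schwartz_general (n : ℕ)
    (lam : SchwartzMap (Fin 4 → ℝ) ℂ) :
    ∃ g : SchwartzMap (Fin n → Fin 4 → ℝ) ℂ, ∀ a : Fin n → Fin 4 → ℝ,
      g a = lam ((n : ℝ)⁻¹ • ∑ j, a j) *
        (Real.exp (-(1/2) * ∑ j, ∑ μ : Fin 4,
          (a j μ - ((n : ℝ)⁻¹ • ∑ l, a l) μ) ^ 2) : ℂ) := by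
  let κ : (Fin n → Fin 4 → ℝ) →L[ℝ] (Fin 4 → ℝ) :=
    (n : ℝ)⁻¹ • ∑ j, ContinuousLinearMap.proj j
  have hκ : ∀ a, κ a = (n : ℝ)⁻¹ • ∑ j, a j := fun a => by simp [κ]
  let L := κ.prod (ContinuousLinearMap.pi fun j => ContinuousLinearMap.proj j - κ)
  refine ⟨compCLMOfAntilipschitz ℝ L.hasTemperateGrowth κ.antilipschitzWith_prod_pi_proj_sub
    (tensor lam (tensorPow (tensorPow gaussian 4) n)), fun a => ?_⟩
  simp only [compCLMOfAntilipschitz_apply, Function.comp_apply, tensor_apply,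
    tensorPow_tensorPow_gaussian_apply, L, ContinuousLinearMap.prod_apply,
    ContinuousLinearMap.pi_apply, sub_apply, ContinuousLinearMap.proj_apply, Pi.sub_apply, hκ]

theorem gaussian_cutoff_kernel_is_schwartz (n : ℕ) (hn : 1 ≤ n)
    (lam : SchwartzMap (Fin 4 → ℝ) ℂ) :
    ∃ g : SchwartzMap (Fin n → Fin 4 → ℝ) ℂ, ∀ a : Fin n → Fin 4 → ℝ,
      g a = lam ((n : ℝ)⁻¹ • ∑ j, a j) *
        (Real.exp (-(1/2) * ∑ j, ∑ μ : Fin 4,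
          (a j μ - ((n : ℝ)⁻¹ • ∑ l, a l) μ) ^ 2) : ℂ) :=
  gaussian_cutoff_kernel_is_schwartz_general n lam
end

section
/- Let d ≥ 1, m > 0, and let F be a Schwartz function on (ℝ⁴)^d. Then the function ℝ^{3d} → ℂ given by (𝐤₁,…,𝐤_d) ↦ F( (ω(𝐤₁),𝐤₁), …, (ω(𝐤_d),𝐤_d) ), where ω(𝐤) = √(|𝐤|² + m²), is a Schwartz function on ℝ^{3d}. -/
/-!
In the Euclidean norm, `ω(𝐤) = m (1 + |𝐤/m|²)^{1/2}` is a rescaled Bessel potential, so it has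
temperate growth; hence so does `𝐤 ↦ (k̃_1, …, k̃_d)`. That map keeps the spatial momenta, so it
is antilipschitz, and composition on the right with a temperate, antilipschitz map sends Schwartz
functions to Schwartz functions.
-/

open scoped BigOperators

/-- Relativistic energy `ω(𝐤) = √(|𝐤|² + m²)`. -/
noncomputable def omegaM (m : ℝ) (k : Fin 3 → ℝ) : ℝ :=
  Real.sqrt ((∑ i, k i ^ 2) + m ^ 2)

/-- The mass-shell point `k̃ = (ω(𝐤), 𝐤) ∈ ℝ⁴`. -/
noncomputable def massShell (m : ℝ) (k : Fin 3 → ℝ) : Fin 4 → ℝ :=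
  Fin.cons (omegaM m k) k

namespace Function.HasTemperateGrowth

variable {E : Type*} [NormedAddCommGroup E] [NormedSpace ℝ E]

theorem pi {ι : Type*} [Fintype ι] {F : ι → Type*}
    [∀ i, NormedAddCommGroup (F i)] [∀ i, NormedSpace ℝ (F i)] {f : ∀ i, E → F i}
    (hf : ∀ i, (f i).HasTemperateGrowth) : (fun x i ↦ f i x).HasTemperateGrowth := by
  classical
  have hsum : (fun x i ↦ f i x) = fun x ↦ ∑ i, ContinuousLinearMap.single ℝ F i (f i x) := by
    ext x i
    simp
  rw [hsum]
  exact .sum fun i _ ↦ (ContinuousLinearMap.single ℝ F i).hasTemperateGrowth.comp (hf i)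

end Function.HasTemperateGrowth

theorem AntilipschitzWith.piMap {ι : Type*} [Fintype ι] {α β : Type*} [PseudoEMetricSpace α]
    [PseudoEMetricSpace β] {K : NNReal} {f : α → β} (hf : AntilipschitzWith K f) :
    AntilipschitzWith K (fun (x : ι → α) i ↦ f (x i)) := fun x y ↦
  edist_pi_le_iff.2 fun i ↦ (hf (x i) (y i)).trans <| by
    gcongr
    exact edist_le_pi_edist (fun i ↦ f (x i)) (fun i ↦ f (y i)) i

theorem Function.hasTemperateGrowth_sqrt_norm_sq_add_sq (H : Type*) [NormedAddCommGroup H]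
    [InnerProductSpace ℝ H] {m : ℝ} (hm : m ≠ 0) :
    (fun x : H ↦ √(‖x‖ ^ 2 + m ^ 2)).HasTemperateGrowth := by
  have hbessel : (fun x : H ↦ √(‖x‖ ^ 2 + m ^ 2)) =
      fun x ↦ |m| * (1 + ‖m⁻¹ • x‖ ^ 2) ^ (1 / 2 : ℝ) := by
    ext x
    rw [← Real.sqrt_eq_rpow, ← Real.sqrt_sq_eq_abs, ← Real.sqrt_mul (sq_nonneg m), norm_smul,
      mul_pow, norm_inv, Real.norm_eq_abs, inv_pow, sq_abs]
    congr 1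
    field_simp
    ring
  rw [hbessel]
  exact (HasTemperateGrowth.const _).mul ((hasTemperateGrowth_one_add_norm_sq_rpow H _).comp
    (m⁻¹ • ContinuousLinearMap.id ℝ H).hasTemperateGrowth)

theorem hasTemperateGrowth_omegaM {m : ℝ} (hm : m ≠ 0) : (omegaM m).HasTemperateGrowth := by
  have h : omegaM m = (fun x : EuclideanSpace ℝ (Fin 3) ↦ √(‖x‖ ^ 2 + m ^ 2)) ∘
      (EuclideanSpace.equiv (Fin 3) ℝ).symm := by
    ext k
    simp [omegaM, EuclideanSpace.real_norm_sq_eq]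
  rw [h]
  exact (Function.hasTemperateGrowth_sqrt_norm_sq_add_sq _ hm).comp
    (EuclideanSpace.equiv (Fin 3) ℝ).symm.hasTemperateGrowth

theorem hasTemperateGrowth_massShell {m : ℝ} (hm : m ≠ 0) : (massShell m).HasTemperateGrowth := by
  refine Function.HasTemperateGrowth.pi (f := fun i k ↦ massShell m k i) fun i ↦ ?_
  cases i using Fin.cases with
  | zero => exact hasTemperateGrowth_omegaM hm
  | succ i =>
    exact (ContinuousLinearMap.proj (R := ℝ) (φ := fun _ : Fin 3 ↦ ℝ) i).hasTemperateGrowth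

theorem antilipschitzWith_massShell (m : ℝ) : AntilipschitzWith 1 (massShell m) :=
  AntilipschitzWith.of_le_mul_dist fun k k' ↦ by
    rw [NNReal.coe_one, one_mul]
    refine (dist_pi_le_iff dist_nonneg).2 fun i ↦ ?_
    simpa [massShell] using dist_le_pi_dist (massShell m k) (massShell m k') i.succ

theorem schwartz_restricted_to_mass_shell_general (d : ℕ) (m : ℝ) (hm : 0 < m)
    (F : SchwartzMap (Fin d → Fin 4 → ℝ) ℂ) :
    ∃ g : SchwartzMap (Fin d → Fin 3 → ℝ) ℂ, ∀ k : Fin d → Fin 3 → ℝ,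
      g k = F (fun j => massShell m (k j)) := by
  have hΦ : (fun (k : Fin d → Fin 3 → ℝ) j ↦ massShell m (k j)).HasTemperateGrowth :=
    .pi fun j ↦ (hasTemperateGrowth_massShell hm.ne').comp
      (ContinuousLinearMap.proj (R := ℝ) (φ := fun _ : Fin d ↦ Fin 3 → ℝ) j).hasTemperateGrowth
  exact ⟨SchwartzMap.compCLMOfAntilipschitz ℂ hΦ (antilipschitzWith_massShell m).piMap F,
    fun k ↦ rfl⟩

theorem schwartz_restricted_to_mass_shell (d : ℕ) (hd : 1 ≤ d) (m : ℝ) (hm : 0 < m)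
    (F : SchwartzMap (Fin d → Fin 4 → ℝ) ℂ) :
    ∃ g : SchwartzMap (Fin d → Fin 3 → ℝ) ℂ, ∀ k : Fin d → Fin 3 → ℝ,
      g k = F (fun j => massShell m (k j)) :=
  schwartz_restricted_to_mass_shell_general d m hm F
end

section
/- Let n ≥ 1, m > 0, signs ε₁, …, ε_n ∈ {−1, +1}, and let λ be a Schwartz function on ℝ⁴ with Fourier transform λ̂. Define W : ℝ^{3n} → ℂ by W(𝐤₁,…,𝐤_n) = λ̂( Σ_{j=1}^n ε_j k̃_j ) · exp( −(1/2) Σ_{j=1}^n | ε_j k̃_j − κ |_E² ) · ∏_{j=1}^n ω(𝐤_j)^{−1/2}, where k̃_j = (ω(𝐤_j), 𝐤_j), ω(𝐤) = √(|𝐤|² + m²), and κ = (1/n) Σ_{j=1}^n ε_j k̃_j ∈ ℝ⁴. Then W is square-integrable: W ∈ L²(ℝ^{3n}). -/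
open MeasureTheory
open scoped BigOperators
open FourierTransform

/-- The Fourier transform `λ̂(k) = ∫ λ(x) e^{−i⟨k,x⟩} dx` on ℝ⁴ (Euclidean pairing). -/
noncomputable def euclFT (lam : SchwartzMap (Fin 4 → ℝ) ℂ) (k : Fin 4 → ℝ) : ℂ :=
  ∫ x : Fin 4 → ℝ, lam x * Complex.exp (-Complex.I * ((∑ μ, k μ * x μ : ℝ) : ℂ))

noncomputable def euclSchwartz (lam : SchwartzMap (Fin 4 → ℝ) ℂ) :
    SchwartzMap (EuclideanSpace ℝ (Fin 4)) ℂ :=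
  SchwartzMap.compCLMOfContinuousLinearEquiv ℂ (EuclideanSpace.equiv (Fin 4) ℝ) lam

lemma euclFT_eq (lam : SchwartzMap (Fin 4 → ℝ) ℂ) (q : Fin 4 → ℝ) :
    euclFT lam q = SchwartzMap.fourierTransformCLM ℂ (euclSchwartz lam)
      ((2 * Real.pi)⁻¹ • ((EuclideanSpace.equiv (Fin 4) ℝ).symm q)) := by
  rw [SchwartzMap.fourierTransformCLM_apply, SchwartzMap.fourier_coe, Real.fourier_eq']
  rw [← MeasurePreserving.integral_comp
      (EuclideanSpace.volume_preserving_symm_measurableEquiv_toLp (Fin 4)).symm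
      (MeasurableEquiv.measurableEmbedding _)]
  unfold euclFT
  congr 1
  ext x
  have h2pi : (2 * Real.pi) ≠ 0 := by positivity
  have hinner : (inner ℝ ((MeasurableEquiv.toLp 2 (Fin 4 → ℝ)).symm.symm x)
      ((2 * Real.pi)⁻¹ • ((EuclideanSpace.equiv (Fin 4) ℝ).symm q)) : ℝ)
      = (2 * Real.pi)⁻¹ * ∑ μ, q μ * x μ := by
    simp [PiLp.inner_apply, MeasurableEquiv.coe_toLp, Finset.mul_sum]
    refine Finset.sum_congr rfl fun i _ => ?_
    ring
  rw [hinner]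
  have hlam : (euclSchwartz lam) ((MeasurableEquiv.toLp 2 (Fin 4 → ℝ)).symm.symm x) = lam x := by
    simp [euclSchwartz, MeasurableEquiv.coe_toLp]
    rfl
  rw [hlam, smul_eq_mul, mul_comm]
  congr 1
  have : (-2 * Real.pi * ((2 * Real.pi)⁻¹ * ∑ μ : Fin 4, q μ * x μ)) 
      = -(∑ μ : Fin 4, q μ * x μ) := by
    field_simp
  rw [this]
  push_cast
  ring

lemma euclFT_decay (lam : SchwartzMap (Fin 4 → ℝ) ℂ) (N : ℕ) :
    ∃ C : ℝ, 0 < C ∧ ∀ q : Fin 4 → ℝ,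
      ‖euclFT lam q‖ * (1 + Real.sqrt (∑ μ, q μ ^ 2)) ^ N ≤ C := by
  set F := SchwartzMap.fourierTransformCLM ℂ (euclSchwartz lam) with hF
  set C₀ : ℝ := 2 ^ N *
    (Finset.Iic (N, 0)).sup (fun m' => SchwartzMap.seminorm ℝ m'.1 m'.2) F with hC₀
  have hC₀nn : 0 ≤ C₀ := by
    apply mul_nonneg (by positivity)
    exact apply_nonneg _ _
  have key : ∀ w : EuclideanSpace ℝ (Fin 4), (1 + ‖w‖) ^ N * ‖F w‖ ≤ C₀ := by
    intro w
    have := SchwartzMap.one_add_le_sup_seminorm_apply (𝕜 := ℝ) (m := (N, 0))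
      le_rfl le_rfl F w
    simpa [norm_iteratedFDeriv_zero] using this
  refine ⟨(2 * Real.pi) ^ N * C₀ + 1, by positivity, fun q => ?_⟩
  set w : EuclideanSpace ℝ (Fin 4) :=
    (2 * Real.pi)⁻¹ • ((EuclideanSpace.equiv (Fin 4) ℝ).symm q) with hw
  have hwn : ‖w‖ = (2 * Real.pi)⁻¹ * Real.sqrt (∑ μ, q μ ^ 2) := by
    rw [hw, norm_smul]
    congr 1
    · simp [abs_of_pos Real.pi_pos, Real.norm_eq_abs]
    · rw [EuclideanSpace.norm_eq]
      congr 1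
      refine Finset.sum_congr rfl fun μ _ => ?_
      simp [Real.norm_eq_abs, sq_abs]
  have hpi1 : (1 : ℝ) ≤ 2 * Real.pi := by nlinarith [Real.pi_gt_three]
  have h1 : 1 + Real.sqrt (∑ μ, q μ ^ 2) ≤ (2 * Real.pi) * (1 + ‖w‖) := by
    rw [hwn, mul_add, mul_one, mul_inv_cancel_left₀ (by positivity : (2*Real.pi) ≠ 0)]
    linarith
  have hsq : (0:ℝ) ≤ 1 + Real.sqrt (∑ μ, q μ ^ 2) := by positivity
  calc ‖euclFT lam q‖ * (1 + Real.sqrt (∑ μ, q μ ^ 2)) ^ N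
      ≤ ‖F w‖ * ((2 * Real.pi) * (1 + ‖w‖)) ^ N := by
        rw [euclFT_eq lam q]
        exact mul_le_mul_of_nonneg_left (pow_le_pow_left₀ hsq h1 N) (norm_nonneg _)
    _ = (2 * Real.pi) ^ N * ((1 + ‖w‖) ^ N * ‖F w‖) := by rw [mul_pow]; ring
    _ ≤ (2 * Real.pi) ^ N * C₀ := by
        exact mul_le_mul_of_nonneg_left (key w) (by positivity)
    _ ≤ (2 * Real.pi) ^ N * C₀ + 1 := by linarith

lemma variance_ident {n : ℕ} (hn : 1 ≤ n) (b : Fin n → ℝ) :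
    ∑ j, (b j - (n : ℝ)⁻¹ * ∑ l, b l) ^ 2
      = (∑ j, (b j) ^ 2) - (n : ℝ)⁻¹ * (∑ l, b l) ^ 2 := by
  have hne : (n : ℝ) ≠ 0 := by positivity
  have h1 : ∀ j ∈ Finset.univ, (b j - (n : ℝ)⁻¹ * ∑ l, b l) ^ 2
      = (b j) ^ 2 - (2 * (n : ℝ)⁻¹ * ∑ l, b l) * b j + ((n : ℝ)⁻¹ * ∑ l, b l) ^ 2 :=
    fun j _ => by ring
  rw [Finset.sum_congr rfl h1, Finset.sum_add_distrib, Finset.sum_sub_distrib,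
    ← Finset.mul_sum, Finset.sum_const, Finset.card_univ, Fintype.card_fin, nsmul_eq_mul]
  field_simp
  ring

lemma poly_exp_bound (N : ℕ) (hN : 1 ≤ N) (V : ℝ) (hV : 0 ≤ V) :
    Real.exp (-(1/2) * V) * (1 + Real.sqrt V) ^ N ≤ 2 ^ N * (2 * N) ^ N := by
  have hNR : (1 : ℝ) ≤ N := by exact_mod_cast hN
  have hsV : Real.sqrt V ≤ 1 + V := by
    nlinarith [Real.sq_sqrt hV, Real.sqrt_nonneg V]
  have h2 : (1 + Real.sqrt V) ^ N ≤ (2 * (1 + V)) ^ N := by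
    apply pow_le_pow_left₀ (by positivity)
    nlinarith [Real.sqrt_nonneg V]
  have h3 : 1 + V ≤ (2 * N) * Real.exp (V / (2 * N)) := by
    have h := Real.add_one_le_exp (V / (2 * N))
    have h' := mul_le_mul_of_nonneg_left h (by positivity : (0:ℝ) ≤ 2 * N)
    have he : (2 * (N:ℝ)) * (V / (2 * N) + 1) = V + 2 * N := by field_simp
    rw [he] at h'
    linarith
  have h4 : (1 + V) ^ N ≤ (2 * N) ^ N * Real.exp (V / 2) := by
    calc (1 + V) ^ N ≤ ((2 * N) * Real.exp (V / (2 * N))) ^ N :=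
          pow_le_pow_left₀ (by positivity) h3 N
      _ = (2 * N) ^ N * Real.exp (V / (2 * N)) ^ N := mul_pow _ _ _
      _ = (2 * N) ^ N * Real.exp (V / 2) := by
          rw [← Real.exp_nat_mul]
          congr 1
          field_simp
  calc Real.exp (-(1/2) * V) * (1 + Real.sqrt V) ^ N
      ≤ Real.exp (-(1/2) * V) * (2 ^ N * ((2 * N) ^ N * Real.exp (V / 2))) := by
        apply mul_le_mul_of_nonneg_left _ (Real.exp_nonneg _)
        calc (1 + Real.sqrt V) ^ N ≤ (2 * (1 + V)) ^ N := h2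
          _ = 2 ^ N * (1 + V) ^ N := mul_pow _ _ _
          _ ≤ 2 ^ N * ((2 * N) ^ N * Real.exp (V / 2)) := by
              exact mul_le_mul_of_nonneg_left h4 (by positivity)
    _ = 2 ^ N * (2 * N) ^ N * (Real.exp (-(1/2) * V) * Real.exp (V / 2)) := by ring
    _ = 2 ^ N * (2 * N) ^ N := by
        rw [← Real.exp_add]
        ring_nf
        simp


set_option maxHeartbeats 1000000 in
theorem transition_amplitude_kernel_is_square_integrable (n : ℕ) (hn : 1 ≤ n)
    (m : ℝ) (hm : 0 < m) (ε : Fin n → ℝ) (hε : ∀ j, ε j = 1 ∨ ε j = -1)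
    (lam : SchwartzMap (Fin 4 → ℝ) ℂ) :
    MemLp (fun k : Fin n → Fin 3 → ℝ =>
        euclFT lam (∑ j, ε j • massShell m (k j)) *
        (Real.exp (-(1/2) * ∑ j, ∑ μ : Fin 4,
          (ε j * massShell m (k j) μ -
            ((n : ℝ)⁻¹ • ∑ l, ε l • massShell m (k l)) μ) ^ 2) : ℂ) *
        ((∏ j, omegaM m (k j) ^ (-(1/2) : ℝ) : ℝ) : ℂ))
      2 (volume : Measure (Fin n → Fin 3 → ℝ)) := by
  have hn0 : (0:ℝ) < n := by exact_mod_cast hn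
  set N : ℕ := 3 * n + 1 with hNdef
  have hN1 : 1 ≤ N := by omega
  obtain ⟨C, hCpos, hC⟩ := euclFT_decay lam N
  -- continuity facts
  have homega : ∀ j : Fin n, Continuous fun k : Fin n → Fin 3 → ℝ => omegaM m (k j) := by
    intro j
    apply Real.continuous_sqrt.comp
    apply Continuous.add _ continuous_const
    exact continuous_finset_sum _ fun i _ =>
      ((continuous_apply i).comp (continuous_apply j)).pow 2
  have homegapos : ∀ (j : Fin n) (k : Fin n → Fin 3 → ℝ), 0 < omegaM m (k j) := by
    intro j k
    apply Real.sqrt_pos.mpr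
    have h0 : (0:ℝ) ≤ ∑ i, (k j i)^2 := Finset.sum_nonneg fun i _ => sq_nonneg _
    nlinarith
  have homegage : ∀ (j : Fin n) (k : Fin n → Fin 3 → ℝ), m ≤ omegaM m (k j) := by
    intro j k
    have h0 : (0:ℝ) ≤ ∑ i, (k j i)^2 := Finset.sum_nonneg fun i _ => sq_nonneg _
    calc m = Real.sqrt (m ^ 2) := (Real.sqrt_sq hm.le).symm
      _ ≤ _ := Real.sqrt_le_sqrt (by linarith)
  have hms : ∀ j : Fin n, Continuous fun k : Fin n → Fin 3 → ℝ => massShell m (k j) := by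
    intro j
    apply continuous_pi
    intro μ
    refine Fin.cases ?_ ?_ μ
    · simpa [massShell] using homega j
    · intro i
      simpa [massShell] using (continuous_apply_apply j i :
          Continuous fun a : Fin n → Fin 3 → ℝ => a j i)
  have hp : Continuous fun k : Fin n → Fin 3 → ℝ => ∑ j, ε j • massShell m (k j) :=
    continuous_finset_sum _ fun j _ => (hms j).const_smul (ε j)
  have hFT : Continuous (euclFT lam) := by
    have h1 : Continuous fun q : Fin 4 → ℝ =>
        SchwartzMap.fourierTransformCLM ℂ (euclSchwartz lam)
          ((2 * Real.pi)⁻¹ • ((EuclideanSpace.equiv (Fin 4) ℝ).symm q)) :=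
      (SchwartzMap.continuous _).comp
        ((continuous_const_smul _).comp (EuclideanSpace.equiv (Fin 4) ℝ).symm.continuous)
    exact h1.congr fun q => (euclFT_eq lam q).symm
  have hVc : Continuous fun k : Fin n → Fin 3 → ℝ => ∑ j, ∑ μ : Fin 4,
      (ε j * massShell m (k j) μ - ((n : ℝ)⁻¹ • ∑ l, ε l • massShell m (k l)) μ) ^ 2 := by
    apply continuous_finset_sum
    intro j _
    apply continuous_finset_sum
    intro μ _
    apply Continuous.pow
    apply Continuous.sub
    · exact continuous_const.mul ((continuous_apply μ).comp (hms j))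
    · exact (continuous_apply μ).comp (hp.const_smul ((n : ℝ)⁻¹) :
        Continuous fun k : Fin n → Fin 3 → ℝ => (n : ℝ)⁻¹ • ∑ l, ε l • massShell m (k l))
  have hcont : Continuous (fun k : Fin n → Fin 3 → ℝ =>
        euclFT lam (∑ j, ε j • massShell m (k j)) *
        (Real.exp (-(1/2) * ∑ j, ∑ μ : Fin 4,
          (ε j * massShell m (k j) μ -
            ((n : ℝ)⁻¹ • ∑ l, ε l • massShell m (k l)) μ) ^ 2) : ℂ) *
        ((∏ j, omegaM m (k j) ^ (-(1/2) : ℝ) : ℝ) : ℂ)) := by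
    apply Continuous.mul
    apply Continuous.mul
    · exact hFT.comp hp
    · exact Complex.continuous_ofReal.comp
        (Real.continuous_exp.comp (continuous_const.mul hVc))
    · exact Complex.continuous_ofReal.comp (continuous_finset_prod _ fun j _ =>
        (homega j).rpow_const fun k => Or.inl (homegapos j k).ne')
  set D : ℝ := C * (2 ^ N * (2 * N) ^ N) * (m ^ (-(1/2) : ℝ)) ^ n with hD
  -- pointwise bound
  have hbound : ∀ k : Fin n → Fin 3 → ℝ,
      ‖euclFT lam (∑ j, ε j • massShell m (k j)) *
        (Real.exp (-(1/2) * ∑ j, ∑ μ : Fin 4,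
          (ε j * massShell m (k j) μ -
            ((n : ℝ)⁻¹ • ∑ l, ε l • massShell m (k l)) μ) ^ 2) : ℂ) *
        ((∏ j, omegaM m (k j) ^ (-(1/2) : ℝ) : ℝ) : ℂ)‖
        ≤ D * ((1 + ‖k‖) ^ N)⁻¹ := by
    intro k
    set p : Fin 4 → ℝ := ∑ j, ε j • massShell m (k j) with hpdef
    set V : ℝ := ∑ j, ∑ μ : Fin 4,
      (ε j * massShell m (k j) μ -
        ((n : ℝ)⁻¹ • ∑ l, ε l • massShell m (k l)) μ) ^ 2 with hVdef
    set P : ℝ := ∏ j, omegaM m (k j) ^ (-(1/2) : ℝ) with hPdef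
    have hVnn : 0 ≤ V := by
      rw [hVdef]
      exact Finset.sum_nonneg fun j _ => Finset.sum_nonneg fun μ _ => sq_nonneg _
    have hPnn : 0 ≤ P := by
      rw [hPdef]
      exact Finset.prod_nonneg fun j _ => Real.rpow_nonneg (Real.sqrt_nonneg _) _
    set P2 : ℝ := ∑ μ, p μ ^ 2 with hP2def
    have hP2nn : 0 ≤ P2 := by
      rw [hP2def]; exact Finset.sum_nonneg fun μ _ => sq_nonneg _
    set R2 : ℝ := ∑ j, ∑ i, (k j i) ^ 2 with hR2def
    clear_value P2 R2
    -- variance computation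
    have hpμ : ∀ μ : Fin 4, p μ = ∑ l, ε l * massShell m (k l) μ := by
      intro μ; rw [hpdef]; simp [Finset.sum_apply]
    have hκ : ∀ μ : Fin 4, ((n : ℝ)⁻¹ • ∑ l, ε l • massShell m (k l)) μ
        = (n:ℝ)⁻¹ * ∑ l, ε l * massShell m (k l) μ := by
      intro μ; simp [Finset.sum_apply]
    have hμ : ∀ μ : Fin 4, (∑ j, (ε j * massShell m (k j) μ -
          ((n : ℝ)⁻¹ • ∑ l, ε l • massShell m (k l)) μ) ^ 2)
        = (∑ j, (ε j * massShell m (k j) μ)^2) - (n:ℝ)⁻¹ * (p μ)^2 := by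
      intro μ
      simp only [hκ μ]
      rw [variance_ident hn (fun j => ε j * massShell m (k j) μ), hpμ μ]
    have hVar : V = (∑ μ : Fin 4, ∑ j, (ε j * massShell m (k j) μ)^2) - (n:ℝ)⁻¹ * P2 := by
      rw [hVdef, Finset.sum_comm, Finset.sum_congr rfl fun μ _ => hμ μ,
        Finset.sum_sub_distrib, ← Finset.mul_sum, hP2def]
    have hsq : ∀ j, ∑ μ : Fin 4, (ε j * massShell m (k j) μ) ^ 2
        = (omegaM m (k j))^2 + ∑ i, (k j i)^2 := by
      intro j
      have hε2 : (ε j)^2 = 1 := by rcases hε j with h | h <;> rw [h] <;> norm_num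
      have h1 : ∀ μ ∈ Finset.univ, (ε j * massShell m (k j) μ)^2
          = (massShell m (k j) μ)^2 := fun μ _ => by rw [mul_pow, hε2, one_mul]
      rw [Finset.sum_congr rfl h1, Fin.sum_univ_succ]
      simp [massShell]
    have hkey : R2 ≤ V + P2 := by
      have h2 : (∑ μ : Fin 4, ∑ j, (ε j * massShell m (k j) μ)^2)
          = ∑ j, ((omegaM m (k j))^2 + ∑ i, (k j i)^2) := by
        rw [Finset.sum_comm]; exact Finset.sum_congr rfl fun j _ => hsq j
      have h3 : R2 ≤ ∑ j, ((omegaM m (k j))^2 + ∑ i, (k j i)^2) := by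
        rw [hR2def]
        exact Finset.sum_le_sum fun j _ => le_add_of_nonneg_left (sq_nonneg _)
      have h5 : (n:ℝ)⁻¹ ≤ 1 :=
        inv_le_one_of_one_le₀ (by exact_mod_cast hn)
      nlinarith [hVar, h2, h3, hP2nn]
    have hsqrt : Real.sqrt R2 ≤ Real.sqrt V + Real.sqrt P2 := by
      have hle : R2 ≤ (Real.sqrt V + Real.sqrt P2)^2 := by
        nlinarith [Real.sq_sqrt hVnn, Real.sq_sqrt hP2nn,
          mul_nonneg (Real.sqrt_nonneg V) (Real.sqrt_nonneg P2)]
      calc Real.sqrt R2 ≤ Real.sqrt ((Real.sqrt V + Real.sqrt P2)^2) :=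
            Real.sqrt_le_sqrt hle
        _ = _ := Real.sqrt_sq (by positivity)
    have hknorm : ‖k‖ ≤ Real.sqrt R2 := by
      rw [pi_norm_le_iff_of_nonneg (Real.sqrt_nonneg _)]
      intro j
      rw [pi_norm_le_iff_of_nonneg (Real.sqrt_nonneg _)]
      intro i
      rw [Real.norm_eq_abs, ← Real.sqrt_sq_eq_abs]
      apply Real.sqrt_le_sqrt
      calc (k j i)^2 ≤ ∑ i', (k j i')^2 :=
            Finset.single_le_sum (f := fun i' => (k j i')^2)
              (fun i' _ => sq_nonneg _) (Finset.mem_univ i)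
        _ ≤ R2 := by
            rw [hR2def]
            exact Finset.single_le_sum (f := fun j' => ∑ i', (k j' i')^2)
              (fun j' _ => Finset.sum_nonneg fun i' _ => sq_nonneg _) (Finset.mem_univ j)
    have hfac : (1 + ‖k‖) ^ N ≤ (1 + Real.sqrt V)^N * (1 + Real.sqrt P2)^N := by
      rw [← mul_pow]
      apply pow_le_pow_left₀ (by positivity)
      nlinarith [Real.sqrt_nonneg V, Real.sqrt_nonneg P2, hknorm, hsqrt]
    have hnorm : ‖euclFT lam p * (Real.exp (-(1/2) * V) : ℂ) * (P : ℂ)‖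
        = ‖euclFT lam p‖ * Real.exp (-(1/2) * V) * P := by
      rw [norm_mul, norm_mul, Complex.norm_real, Complex.norm_real,
        Real.norm_eq_abs, Real.norm_eq_abs, abs_of_pos (Real.exp_pos _),
        abs_of_nonneg hPnn]
    have hPle : P ≤ (m ^ (-(1/2) : ℝ)) ^ n := by
      rw [hPdef]
      calc ∏ j, omegaM m (k j) ^ (-(1/2):ℝ) ≤ ∏ _j : Fin n, m ^ (-(1/2):ℝ) := by
            apply Finset.prod_le_prod (fun j _ => Real.rpow_nonneg (Real.sqrt_nonneg _) _)
            intro j _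
            exact Real.rpow_le_rpow_of_nonpos hm (homegage j k) (by norm_num)
        _ = (m ^ (-(1/2):ℝ)) ^ n := by
            rw [Finset.prod_const, Finset.card_univ, Fintype.card_fin]
    have e1 : ‖euclFT lam p‖ * (1 + Real.sqrt P2) ^ N ≤ C := by
      have := hC p
      rwa [← hP2def] at this
    have e2 : Real.exp (-(1/2) * V) * (1 + Real.sqrt V) ^ N ≤ 2 ^ N * (2 * N) ^ N :=
      poly_exp_bound N hN1 V hVnn
    have hX : (0:ℝ) < (1 + ‖k‖)^N := by positivity
    rw [← div_eq_mul_inv, le_div_iff₀ hX]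
    calc ‖euclFT lam p * (Real.exp (-(1/2) * V) : ℂ) * (P : ℂ)‖ * (1 + ‖k‖)^N
        ≤ (‖euclFT lam p‖ * Real.exp (-(1/2) * V) * P) *
            ((1 + Real.sqrt V)^N * (1 + Real.sqrt P2)^N) := by
          rw [hnorm]
          apply mul_le_mul_of_nonneg_left hfac
          positivity
      _ = (‖euclFT lam p‖ * (1 + Real.sqrt P2)^N) *
            (Real.exp (-(1/2) * V) * (1 + Real.sqrt V)^N) * P := by ring
      _ ≤ C * (2 ^ N * (2 * N) ^ N) * ((m ^ (-(1/2) : ℝ)) ^ n) := by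
          apply mul_le_mul _ hPle hPnn (mul_nonneg hCpos.le (by positivity))
          exact mul_le_mul e1 e2 (by positivity) hCpos.le
      _ = D := by rw [hD]
  -- integrability of the comparison function
  have hfinrank : (Module.finrank ℝ (Fin n → Fin 3 → ℝ) : ℝ) < 2 * N := by
    have hfr : Module.finrank ℝ (Fin n → Fin 3 → ℝ) = 3 * n := by
      simp [Module.finrank_pi_fintype]
      ring
    rw [hfr, hNdef]
    push_cast
    linarith
  have hint : Integrable (fun x : Fin n → Fin 3 → ℝ => (1 + ‖x‖) ^ (-(2 * N : ℝ))) volume :=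
    integrable_one_add_norm hfinrank
  have hint2 : Integrable (fun x : Fin n → Fin 3 → ℝ => (((1 + ‖x‖) ^ N)⁻¹) ^ 2) volume := by
    apply hint.congr
    apply Filter.Eventually.of_forall
    intro x
    have h1 : (0:ℝ) < 1 + ‖x‖ := by positivity
    show (1 + ‖x‖) ^ (-(2 * N : ℝ)) = (((1 + ‖x‖) ^ N)⁻¹) ^ 2
    rw [show (-(2 * N : ℝ)) = -((2*N : ℕ) : ℝ) by push_cast; ring,
      Real.rpow_neg h1.le, Real.rpow_natCast, pow_mul', inv_pow]
  have hg2 : MemLp (fun x : Fin n → Fin 3 → ℝ => ((1 + ‖x‖) ^ N)⁻¹) 2 volume := by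
    have hcont2 : Continuous fun x : Fin n → Fin 3 → ℝ => ((1 + ‖x‖) ^ N)⁻¹ :=
      ((continuous_const.add continuous_norm).pow N).inv₀ fun x => (pow_pos (by positivity : (0:ℝ) < 1 + ‖x‖) N).ne'
    rw [memLp_two_iff_integrable_sq hcont2.aestronglyMeasurable]
    exact hint2
  have hg : MemLp (fun x : Fin n → Fin 3 → ℝ => D * ((1 + ‖x‖) ^ N)⁻¹) 2 volume :=
    hg2.const_mul D
  refine hg.of_le hcont.aestronglyMeasurable (Filter.Eventually.of_forall fun x => ?_)
  have hDnn : 0 ≤ D := by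
    rw [hD]
    exact mul_nonneg (mul_nonneg hCpos.le (by positivity)) (by positivity)
  calc ‖_‖ ≤ D * ((1 + ‖x‖)^N)⁻¹ := hbound x
    _ = ‖D * ((1 + ‖x‖)^N)⁻¹‖ := by
        rw [Real.norm_eq_abs, abs_of_nonneg (mul_nonneg hDnn (by positivity))]
end
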